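/- arXiv:1710.06399 — 7 statements merged into one kernel-verified Lean document; each statement's English description precedes it below -/
import Mathlib

section
/- Let R, Q > 0 and μ > 1. Define w : [0,∞) → ℝ by w(r) = 0 for r ∈ [0,R], w(r) = Q·(2R)^{2μ}·(r−R)/R for r ∈ (R,2R], and w(r) = Q·r^{2μ} for r > 2R. Let ψ be the solution of the ODE ψ''(r) = w(r)·ψ(r) for r > 0 with ψ(0) = 0 and ψ'(0) = 1. Then ψ is twice continuously differentiable on [0,∞), ψ is strictly positive on (0,∞) with lim_{r→∞} ψ(r) = +∞, ψ' is strictly positive on [0,∞), and lim_{r→∞} ψ'(r)/(r^μ · ψ(r)) = √Q. -/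
/-!
Since `w ≥ 0`, the derivative `ψ'` cannot decrease while `ψ > 0`, and `ψ` increases while
`ψ' > 0`; starting from `ψ(0) = 0`, `ψ'(0) = 1` a continuity argument gives `ψ' ≥ 1`, hence
`ψ(r) ≥ r`. Regularity at `0` holds because `ψ'' = w ψ` extends continuously to `0`.
For `r > 2R` the logarithmic derivative `u = ψ'/ψ` solves the Riccati equation
`u' = Q r^(2μ) - u²`. For `k² < Q < K²` the curves `k r^μ` and `K r^μ` are barriers: at any point
where `u` lies on the wrong side of one of them, `u` moves towards it at a rate bounded below,
so eventually `k r^μ ≤ u ≤ K r^μ`, whence `u / r^μ → √Q`.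
-/

open Real Filter Set Topology

theorem forall_pos_of_forall_Ico_pos {g : ℝ → ℝ} {a : ℝ} (hg : ContinuousOn g (Ici a))
    (ha : 0 < g a) (hstep : ∀ c, a < c → (∀ t ∈ Ico a c, 0 < g t) → 0 < g c) :
    ∀ t, a ≤ t → 0 < g t := by
  intro b hab
  by_contra! hb
  set S := {t ∈ Icc a b | g t ≤ 0}
  have hS_closed : IsClosed S :=
    (hg.mono Icc_subset_Ici_self).preimage_isClosed_of_isClosed isClosed_Icc isClosed_Iic
  have hS_bdd : BddBelow S := ⟨a, fun t ht => ht.1.1⟩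
  have hc : sInf S ∈ S := hS_closed.csInf_mem ⟨b, ⟨hab, le_rfl⟩, hb⟩ hS_bdd
  have hac : a < sInf S := hc.1.1.lt_of_ne fun h => by linarith [h ▸ hc.2]
  refine (hstep _ hac fun t ht => ?_).not_ge hc.2
  by_contra! hgt
  exact (csInf_le hS_bdd ⟨⟨ht.1, ht.2.le.trans hc.1.2⟩, hgt⟩).not_gt ht.2

theorem eventually_nonpos_of_hasDerivAt_le_neg {g g' : ℝ → ℝ} {c : ℝ} (hc : 0 < c)
    (hg : ∀ᶠ t in atTop, HasDerivAt g (g' t) t)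
    (hg' : ∀ᶠ t in atTop, 0 ≤ g t → g' t ≤ -c) :
    ∀ᶠ t in atTop, g t ≤ 0 := by
  obtain ⟨a, ha⟩ := (hg.and hg').exists_forall_of_atTop
  have hcont : ∀ b, ContinuousOn g (Icc a b) := fun b t ht =>
    (ha t ht.1).1.continuousAt.continuousWithinAt
  have hright : ∀ b, ∀ t ∈ Ico a b, HasDerivWithinAt g (g' t) (Ici t) t := fun b t ht =>
    (ha t ht.1).1.hasDerivWithinAt
  obtain ⟨b, hab, hb⟩ : ∃ b, a ≤ b ∧ g b ≤ 0 := by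
    by_contra! hpos
    have hlin : ∀ t, a ≤ t → g t ≤ g a - c * (t - a) := fun t hat =>
      image_le_of_deriv_right_le_deriv_boundary (hcont t) (hright t) (by simp)
        (by fun_prop) (fun s _ => ((hasDerivAt_id s).sub_const a |>.const_mul c
          |>.const_sub (g a)).hasDerivWithinAt)
        (fun s hs => by simpa using (ha s hs.1).2 (hpos s hs.1).le) ⟨hat, le_rfl⟩
    have hend : a ≤ a + g a / c := le_add_of_nonneg_right (div_pos (hpos a le_rfl) hc).le
    have := hlin _ hend
    rw [add_sub_cancel_left, mul_div_cancel₀ _ hc.ne', sub_self] at this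
    exact (hpos _ hend).not_ge this
  filter_upwards [eventually_ge_atTop b] with t hbt
  refine image_le_of_deriv_right_lt_deriv_boundary (B := fun _ => 0) (B' := fun _ => 0)
    ((hcont t).mono (Icc_subset_Icc_left hab))
    (fun s hs => hright t s ⟨hab.trans hs.1, hs.2⟩) hb (fun _ => hasDerivAt_const _ _)
    (fun s hs hs0 => ?_) ⟨hbt, le_rfl⟩
  linarith [(ha s (hab.trans hs.1)).2 hs0.ge]

theorem rpow_two_mul_eq_sq {t : ℝ} (ht : 0 ≤ t) (μ : ℝ) : t ^ (2 * μ) = (t ^ μ) ^ 2 := by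
  rw [mul_comm]
  exact_mod_cast rpow_mul_natCast ht μ 2

theorem eventually_le_mul_rpow_of_riccati {u : ℝ → ℝ} {Q μ K : ℝ} (hμ : 0 ≤ μ) (hK : 0 ≤ K)
    (hQK : Q < K ^ 2) (hu : ∀ᶠ t in atTop, HasDerivAt u (Q * t ^ (2 * μ) - u t ^ 2) t) :
    ∀ᶠ t in atTop, u t ≤ K * t ^ μ := by
  have hbarrier := eventually_nonpos_of_hasDerivAt_le_neg (g := fun t => u t - K * t ^ μ)
    (g' := fun t => Q * t ^ (2 * μ) - u t ^ 2 - K * (μ * t ^ (μ - 1))) (sub_pos.2 hQK) ?_ ?_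
  · filter_upwards [hbarrier] with t ht
    exact sub_nonpos.1 ht
  · filter_upwards [hu, eventually_gt_atTop 0] with t hut ht
    exact hut.sub ((hasDerivAt_rpow_const (Or.inl ht.ne')).const_mul K)
  · filter_upwards [eventually_ge_atTop 1] with t ht hgt
    have hX : 1 ≤ t ^ μ := one_le_rpow ht hμ
    have hsq : (K * t ^ μ) ^ 2 ≤ u t ^ 2 :=
      pow_le_pow_left₀ (by positivity) (sub_nonneg.1 hgt) 2
    have hdrift : 0 ≤ K * (μ * t ^ (μ - 1)) := by positivity
    rw [rpow_two_mul_eq_sq (by linarith)]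
    nlinarith [mul_nonneg (sub_pos.2 hQK).le (sub_nonneg.2 (one_le_pow₀ hX : 1 ≤ (t ^ μ) ^ 2))]

theorem eventually_mul_rpow_le_of_riccati {u : ℝ → ℝ} {Q μ k : ℝ} (hμ : 0 < μ) (hk : 0 ≤ k)
    (hkQ : k ^ 2 < Q) (hu : ∀ᶠ t in atTop, HasDerivAt u (Q * t ^ (2 * μ) - u t ^ 2) t)
    (hpos : ∀ᶠ t in atTop, 0 < u t) :
    ∀ᶠ t in atTop, k * t ^ μ ≤ u t := by
  have hbarrier := eventually_nonpos_of_hasDerivAt_le_neg (g := fun t => k * t ^ μ - u t)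
    (g' := fun t => k * (μ * t ^ (μ - 1)) - (Q * t ^ (2 * μ) - u t ^ 2)) one_pos ?_ ?_
  · filter_upwards [hbarrier] with t ht
    exact sub_nonpos.1 ht
  · filter_upwards [hu, eventually_gt_atTop 0] with t hut ht
    exact ((hasDerivAt_rpow_const (Or.inl ht.ne')).const_mul k).sub hut
  · have hgrowth : ∀ᶠ t : ℝ in atTop, k * μ + 1 ≤ (Q - k ^ 2) * t ^ μ :=
      ((tendsto_rpow_atTop hμ).const_mul_atTop (sub_pos.2 hkQ)).eventually_ge_atTop _
    filter_upwards [hpos, hgrowth, eventually_ge_atTop 1] with t hut hgrowth ht hgt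
    have hX : 1 ≤ t ^ μ := one_le_rpow ht hμ.le
    have hsq : u t ^ 2 ≤ (k * t ^ μ) ^ 2 := pow_le_pow_left₀ hut.le (sub_nonneg.1 hgt) 2
    have hdrift : k * (μ * t ^ (μ - 1)) ≤ k * μ * t ^ μ := by
      rw [mul_assoc]
      gcongr
      linarith
    rw [rpow_two_mul_eq_sq (by linarith)]
    nlinarith [mul_le_mul_of_nonneg_right hgrowth (by linarith : (0 : ℝ) ≤ t ^ μ)]

theorem tendsto_div_rpow_of_riccati {u : ℝ → ℝ} {Q μ : ℝ} (hμ : 0 < μ)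
    (hu : ∀ᶠ t in atTop, HasDerivAt u (Q * t ^ (2 * μ) - u t ^ 2) t)
    (hpos : ∀ᶠ t in atTop, 0 < u t) :
    Tendsto (fun t => u t / t ^ μ) atTop (𝓝 √Q) := by
  refine tendsto_order.2 ⟨fun b hb => ?_, fun b hb => ?_⟩
  · rcases lt_or_ge b 0 with hb0 | hb0
    · filter_upwards [hpos, eventually_gt_atTop 0] with t hut ht
      exact hb0.trans (div_pos hut (rpow_pos_of_pos ht μ))
    obtain ⟨k, hbk, hkQ⟩ := exists_between hb
    have hk : 0 ≤ k := hb0.trans hbk.le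
    filter_upwards [eventually_mul_rpow_le_of_riccati hμ hk ((lt_sqrt hk).1 hkQ) hu hpos,
      eventually_gt_atTop 0] with t hkt ht
    exact hbk.trans_le ((le_div_iff₀ (rpow_pos_of_pos ht μ)).2 hkt)
  · obtain ⟨K, hQK, hKb⟩ := exists_between hb
    have hK : 0 < K := (sqrt_nonneg Q).trans_lt hQK
    filter_upwards [eventually_le_mul_rpow_of_riccati hμ.le hK.le ((sqrt_lt' hK).1 hQK) hu,
      eventually_gt_atTop 0] with t hKt ht
    exact ((div_le_iff₀ (rpow_pos_of_pos ht μ)).2 hKt).trans_lt hKb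

theorem lt_of_mem_interior_of_subset_Ici {D : Set ℝ} {a t : ℝ} (hD : D ⊆ Ici a)
    (ht : t ∈ interior D) : a < t := by
  simpa using interior_mono hD ht

/-- The radial Jacobi equation `ψ'' = w ψ` on `(a, ∞)`. -/
structure SolvesJacobiEq (w ψ ψ' : ℝ → ℝ) (a : ℝ) : Prop where
  continuousOn : ContinuousOn ψ (Ici a)
  hasDerivAt : ∀ t, a < t → HasDerivAt ψ (ψ' t) t
  continuousOn_deriv : ContinuousOn ψ' (Ici a)
  hasDerivAt_deriv : ∀ t, a < t → HasDerivAt ψ' (w t * ψ t) t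

namespace SolvesJacobiEq

variable {w ψ ψ' : ℝ → ℝ} {a : ℝ} {D : Set ℝ}

theorem strictMonoOn (h : SolvesJacobiEq w ψ ψ' a) (hD : Convex ℝ D) (hDa : D ⊆ Ici a)
    (hψ' : ∀ t ∈ interior D, 0 < ψ' t) : StrictMonoOn ψ D :=
  strictMonoOn_of_hasDerivWithinAt_pos hD (h.continuousOn.mono hDa)
    (fun t ht => (h.hasDerivAt t (lt_of_mem_interior_of_subset_Ici hDa ht)).hasDerivWithinAt) hψ'

theorem monotoneOn_deriv (h : SolvesJacobiEq w ψ ψ' a) (hw : ∀ t, a < t → 0 ≤ w t)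
    (hD : Convex ℝ D) (hDa : D ⊆ Ici a) (hψ : ∀ t ∈ interior D, 0 ≤ ψ t) :
    MonotoneOn ψ' D :=
  monotoneOn_of_hasDerivWithinAt_nonneg hD (h.continuousOn_deriv.mono hDa)
    (fun t ht => (h.hasDerivAt_deriv t (lt_of_mem_interior_of_subset_Ici hDa ht)).hasDerivWithinAt)
    fun t ht => mul_nonneg (hw t (lt_of_mem_interior_of_subset_Ici hDa ht)) (hψ t ht)

/-- As long as `ψ' > 0`, `ψ` increases from `ψ a ≥ 0`, so `ψ'' = w ψ ≥ 0` and `ψ'` cannot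
drop below `ψ' a`. -/
theorem deriv_pos (h : SolvesJacobiEq w ψ ψ' a) (hw : ∀ t, a < t → 0 ≤ w t) (hψa : 0 ≤ ψ a)
    (hψ'a : 0 < ψ' a) : ∀ t, a ≤ t → 0 < ψ' t := by
  refine forall_pos_of_forall_Ico_pos h.continuousOn_deriv hψ'a fun c hac hpos => ?_
  have hsub : Icc a c ⊆ Ici a := Icc_subset_Ici_self
  have hmono := h.strictMonoOn (convex_Icc a c) hsub fun t ht => by
    rw [interior_Icc] at ht
    exact hpos t ⟨ht.1.le, ht.2⟩
  refine hψ'a.trans_le (h.monotoneOn_deriv hw (convex_Icc a c) hsub (fun t ht => ?_)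
    (left_mem_Icc.2 hac.le) (right_mem_Icc.2 hac.le) hac.le)
  rw [interior_Icc] at ht
  exact hψa.trans (hmono (left_mem_Icc.2 hac.le) (Ioo_subset_Icc_self ht) ht.1).le

theorem pos (h : SolvesJacobiEq w ψ ψ' a) (hw : ∀ t, a < t → 0 ≤ w t) (hψa : 0 ≤ ψ a)
    (hψ'a : 0 < ψ' a) : ∀ t, a < t → 0 < ψ t := fun _ ht =>
  hψa.trans_lt <| h.strictMonoOn (convex_Ici a) subset_rfl
    (fun s hs => h.deriv_pos hw hψa hψ'a s (interior_subset hs)) self_mem_Ici ht.le ht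

theorem tendsto_atTop (h : SolvesJacobiEq w ψ ψ' a) (hw : ∀ t, a < t → 0 ≤ w t)
    (hψa : 0 ≤ ψ a) (hψ'a : 0 < ψ' a) : Tendsto ψ atTop atTop := by
  have hmono : MonotoneOn ψ' (Ici a) := h.monotoneOn_deriv hw (convex_Ici a) subset_rfl
    fun t ht => (h.pos hw hψa hψ'a t (lt_of_mem_interior_of_subset_Ici subset_rfl ht)).le
  have hderiv : ∀ s ∈ interior (Ici a), HasDerivAt ψ (ψ' s) s := fun s hs =>
    h.hasDerivAt s (lt_of_mem_interior_of_subset_Ici subset_rfl hs)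
  have hlin : ∀ t, a ≤ t → ψ' a * (t - a) ≤ ψ t - ψ a := fun t ht =>
    (convex_Ici a).mul_sub_le_image_sub_of_le_deriv h.continuousOn
      (fun s hs => (hderiv s hs).differentiableAt.differentiableWithinAt)
      (fun s hs => (hderiv s hs).deriv ▸
        hmono self_mem_Ici (interior_subset hs) (interior_subset hs))
      a self_mem_Ici t ht ht
  refine tendsto_atTop_mono' _ ?_ <| tendsto_atTop_add_const_left _ (ψ a) <|
    (tendsto_atTop_add_const_right _ (-a) tendsto_id).const_mul_atTop hψ'a
  filter_upwards [eventually_ge_atTop a] with t ht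
  dsimp only [id]
  linarith [hlin t ht]

end SolvesJacobiEq

theorem ContDiffOn.continuousOn_deriv_Ici {ψ : ℝ → ℝ} {a : ℝ} (hψ : ContDiffOn ℝ 1 ψ (Ici a))
    (ha : DifferentiableAt ℝ ψ a) : ContinuousOn (deriv ψ) (Ici a) := by
  refine (hψ.continuousOn_derivWithin (uniqueDiffOn_Ici a) le_rfl).congr fun t ht => ?_
  obtain rfl | hat := (show a ≤ t from ht).eq_or_lt
  · exact (ha.derivWithin (uniqueDiffWithinAt_Ici _)).symm
  · exact (derivWithin_of_mem_nhds (Ici_mem_nhds hat)).symm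

/-- The one-sided derivative of `ψ'` at the endpoint `a` comes from the continuity of `g` there. -/
theorem contDiffOn_two_Ici {ψ g : ℝ → ℝ} {a : ℝ} (hψ : ContDiffOn ℝ 1 ψ (Ici a))
    (hψ' : ∀ t, a < t → HasDerivAt (deriv ψ) (g t) t) (hg : ContinuousOn g (Ici a)) :
    ContDiffOn ℝ 2 ψ (Ici a) := by
  have hs : UniqueDiffOn ℝ (Ici a) := uniqueDiffOn_Ici a
  set F := derivWithin ψ (Ici a)
  have hF : ∀ t, a < t → HasDerivAt F (g t) t := fun t ht =>
    (hψ' t ht).congr_of_eventuallyEq <| (eventually_gt_nhds ht).mono fun s hs =>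
      derivWithin_of_mem_nhds (Ici_mem_nhds hs)
  have hFa : HasDerivWithinAt F (g a) (Ici a) a :=
    hasDerivWithinAt_Ici_of_tendsto_deriv (s := Ioi a)
      (fun t ht => (hF t ht).differentiableAt.differentiableWithinAt)
      ((hψ.continuousOn_derivWithin hs le_rfl a self_mem_Ici).mono Ioi_subset_Ici_self)
      self_mem_nhdsWithin
      (((hg a self_mem_Ici).mono Ioi_subset_Ici_self).tendsto.congr'
        (eventually_nhdsWithin_of_forall fun t ht => (hF t ht).deriv.symm))
  have hF' : ∀ t ∈ Ici a, HasDerivWithinAt F (g t) (Ici a) t := by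
    intro t ht
    obtain rfl | hat := (show a ≤ t from ht).eq_or_lt
    exacts [hFa, (hF t hat).hasDerivWithinAt]
  rw [show (2 : WithTop ℕ∞) = 1 + 1 from rfl, contDiffOn_succ_iff_derivWithin hs,
    contDiffOn_one_iff_derivWithin hs]
  exact ⟨hψ.differentiableOn one_ne_zero, by simp, fun t ht => (hF' t ht).differentiableWithinAt,
    hg.congr fun t ht => (hF' t ht).derivWithin (hs t ht)⟩

theorem hasDerivAt_logDeriv_of_hasDerivAt_deriv {ψ : ℝ → ℝ} {c t : ℝ}
    (hψ : DifferentiableAt ℝ ψ t) (hψ' : HasDerivAt (deriv ψ) (c * ψ t) t) (ht : ψ t ≠ 0) :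
    HasDerivAt (logDeriv ψ) (c - logDeriv ψ t ^ 2) t := by
  refine (hψ'.div hψ.hasDerivAt ht).congr_deriv ?_
  rw [logDeriv_apply]
  field_simp

noncomputable def modelCoeff (R Q μ r : ℝ) : ℝ :=
  if r ≤ R then 0
  else if r ≤ 2 * R then Q * (2 * R) ^ (2 * μ) / R * (r - R)
  else Q * r ^ (2 * μ)

theorem continuous_modelCoeff {R Q μ : ℝ} (hR : 0 < R) (hμ : 0 ≤ μ) :
    Continuous (modelCoeff R Q μ) := by
  refine Continuous.if_le continuous_const (Continuous.if_le (by fun_prop)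
    (continuous_const.mul (continuous_rpow_const (by linarith))) continuous_id continuous_const
    fun r hr => ?_) continuous_id continuous_const fun r hr => ?_
  · rw [hr, two_mul, add_sub_cancel_right, div_mul_cancel₀ _ hR.ne', ← two_mul]
  · rw [hr, if_pos (by linarith), sub_self, mul_zero]

theorem modelCoeff_nonneg {R Q μ : ℝ} (hR : 0 < R) (hQ : 0 ≤ Q) (r : ℝ) :
    0 ≤ modelCoeff R Q μ r := by
  unfold modelCoeff
  split_ifs with h₁ h₂
  · exact le_rfl
  · have := rpow_nonneg (by linarith : (0 : ℝ) ≤ 2 * R) (2 * μ)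
    exact mul_nonneg (by positivity) (by linarith)
  · exact mul_nonneg hQ (rpow_nonneg (by linarith) _)

theorem modelCoeff_of_two_mul_lt {R Q μ r : ℝ} (hR : 0 ≤ R) (hr : 2 * R < r) :
    modelCoeff R Q μ r = Q * r ^ (2 * μ) := by
  rw [modelCoeff, if_neg (by linarith), if_neg hr.not_ge]

/-- Lemma 4.1-type ODE comparison lemma (Lemma `lem: ode-comparison`):
the model function `ψ` solving `ψ'' = w ψ`, `ψ(0)=0`, `ψ'(0)=1`, with the piecewise
coefficient `w` vanishing on `[0,R]`, interpolating linearly on `(R,2R]` and equal to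
`Q r^(2μ)` beyond `2R`, is `C²` on `[0,∞)`, positive and increasing, diverges at
infinity, and satisfies `ψ'(r)/(r^μ ψ(r)) → √Q`. -/
theorem stmt_0 (R Q μ : ℝ) (hR : 0 < R) (hQ : 0 < Q) (hμ : 1 < μ)
    (w : ℝ → ℝ)
    (hw : ∀ r : ℝ, 0 ≤ r →
      w r = if r ≤ R then 0
        else if r ≤ 2 * R then Q * (2 * R) ^ (2 * μ) / R * (r - R)
        else Q * r ^ (2 * μ))
    (ψ : ℝ → ℝ)
    (hψC1 : ContDiffOn ℝ 1 ψ (Set.Ici 0))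
    (hψd2 : ∀ r : ℝ, 0 < r → DifferentiableAt ℝ (deriv ψ) r)
    (hψ0 : ψ 0 = 0) (hψ'0 : deriv ψ 0 = 1)
    (hode : ∀ r : ℝ, 0 < r → deriv (deriv ψ) r = w r * ψ r) :
    ContDiffOn ℝ 2 ψ (Set.Ici 0) ∧
    (∀ r : ℝ, 0 < r → 0 < ψ r) ∧
    Filter.Tendsto ψ Filter.atTop Filter.atTop ∧
    (∀ r : ℝ, 0 ≤ r → 0 < deriv ψ r) ∧
    Filter.Tendsto (fun r : ℝ => deriv ψ r / (r ^ μ * ψ r)) Filter.atTop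
      (nhds (Real.sqrt Q)) := by
  have hw_eq : EqOn w (modelCoeff R Q μ) (Ici 0) := hw
  have hw_nonneg : ∀ t, 0 < t → 0 ≤ w t := fun t ht =>
    hw_eq ht.le ▸ modelCoeff_nonneg hR hQ.le t
  have hψ' : ∀ t, 0 < t → DifferentiableAt ℝ ψ t := fun t ht =>
    (hψC1.contDiffAt (Ici_mem_nhds ht)).differentiableAt one_ne_zero
  have hψ'' : ∀ t, 0 < t → HasDerivAt (deriv ψ) (w t * ψ t) t := fun t ht =>
    hode t ht ▸ (hψd2 t ht).hasDerivAt
  have hsol : SolvesJacobiEq w ψ (deriv ψ) 0 :=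
    ⟨hψC1.continuousOn, fun t ht => (hψ' t ht).hasDerivAt,
      hψC1.continuousOn_deriv_Ici (differentiableAt_of_deriv_ne_zero (by simp [hψ'0])), hψ''⟩
  have hψ'0_pos : 0 < deriv ψ 0 := hψ'0 ▸ one_pos
  have hψ'_pos := hsol.deriv_pos hw_nonneg hψ0.ge hψ'0_pos
  have hψ_pos := hsol.pos hw_nonneg hψ0.ge hψ'0_pos
  have hwc : ContinuousOn w (Ici 0) :=
    (continuous_modelCoeff hR (by linarith)).continuousOn.congr hw_eq
  refine ⟨contDiffOn_two_Ici hψC1 hψ'' (hwc.mul hsol.continuousOn), hψ_pos,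
    hsol.tendsto_atTop hw_nonneg hψ0.ge hψ'0_pos, hψ'_pos, ?_⟩
  have hriccati : ∀ᶠ t in atTop,
      HasDerivAt (logDeriv ψ) (Q * t ^ (2 * μ) - logDeriv ψ t ^ 2) t := by
    filter_upwards [eventually_gt_atTop (2 * R)] with t ht
    have ht0 : 0 < t := by linarith
    rw [← modelCoeff_of_two_mul_lt hR.le ht, ← hw_eq ht0.le]
    exact hasDerivAt_logDeriv_of_hasDerivAt_deriv (hψ' t ht0) (hψ'' t ht0) (hψ_pos t ht0).ne'
  have hlogDeriv_pos : ∀ᶠ t in atTop, 0 < logDeriv ψ t := by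
    filter_upwards [eventually_gt_atTop 0] with t ht
    exact div_pos (hψ'_pos t ht.le) (hψ_pos t ht)
  simpa only [logDeriv_apply, div_div, mul_comm] using
    tendsto_div_rpow_of_riccati (by linarith) hriccati hlogDeriv_pos
end

section
/- Let n ≥ 2 be an integer and let m > 1, μ > 1, β > 0 be real numbers. Then there exist r₀ > 0 and C̄ > 0 such that for every C ≥ C̄ and every function 𝔪 : (0,∞) → ℝ satisfying 𝔪(r) ≥ (n−1)/r for all r ∈ (0,1) and 𝔪(r) ≥ β·r^μ for all r ≥ 1, the function v̄(r) := C·(r² + r₀²)^{−(μ−1)/(2(m−1))} satisfies (v̄^m)''(r) + 𝔪(r)·(v̄^m)'(r) + v̄(r)/(m−1) ≤ 0 for all r > 0. -/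
/-!
Write `A = r² + r₀²`, `α = (μ-1)/(2(m-1))` and `γ = mα`, so that `v̄^m = C^m A^{-γ}` and
`v̄ = C A^{-γ-1} A^{(μ+1)/2}`. A direct computation gives
`(v̄^m)'' + 𝔪 (v̄^m)' = -2γ C^m A^{-γ-1} (1 + r𝔪 - 2(γ+1) r²/A)`.
With `κ = min 1 β` and the weight `W(r) = max(1, r²)^{(μ+1)/2}`, the hypotheses on `𝔪` give
`r𝔪(r) ≥ κ W(r)`, while `r² ≤ W(r)` and `A^{(μ+1)/2} ≤ (1 + r₀²)^{(μ+1)/2} W(r)`.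
Taking `r₀² = 4(γ+1)/κ` makes the bracket at least `κW/2`, and taking `C^{m-1}` large
compared with `(1 + r₀²)^{(μ+1)/2}` lets the reaction term `v̄/(m-1)` be absorbed.
-/

open Real

section Profile

variable {c q a : ℝ}

lemma hasDerivAt_sq_add_rpow (ha : 0 < a) (r : ℝ) :
    HasDerivAt (fun s : ℝ => (s ^ 2 + a) ^ q) (2 * r * q * (r ^ 2 + a) ^ (q - 1)) r := by
  have hbase : HasDerivAt (fun s : ℝ => s ^ 2 + a) (2 * r) r := by
    simpa using (hasDerivAt_pow 2 r).add_const a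
  exact hbase.rpow_const (Or.inl (by positivity))

lemma deriv_mul_sq_add_rpow (ha : 0 < a) :
    deriv (fun s : ℝ => c * (s ^ 2 + a) ^ q)
      = fun r => 2 * c * q * (r * (r ^ 2 + a) ^ (q - 1)) :=
  funext fun r => ((hasDerivAt_sq_add_rpow ha r).const_mul c).deriv.trans (by ring)

lemma radial_operator_mul_sq_add_rpow (ha : 0 < a) (M r : ℝ) :
    deriv (deriv fun s : ℝ => c * (s ^ 2 + a) ^ q) r
        + M * deriv (fun s : ℝ => c * (s ^ 2 + a) ^ q) r
      = 2 * c * q * (r ^ 2 + a) ^ (q - 1) * (1 + r * M + 2 * (q - 1) * r ^ 2 / (r ^ 2 + a)) := by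
  have hA : 0 < r ^ 2 + a := by positivity
  have h2 : HasDerivAt (fun s : ℝ => 2 * c * q * (s * (s ^ 2 + a) ^ (q - 1)))
      (2 * c * q * (1 * (r ^ 2 + a) ^ (q - 1) + r * (2 * r * (q - 1) * (r ^ 2 + a) ^ (q - 1 - 1))))
      r :=
    ((hasDerivAt_id' r).mul (hasDerivAt_sq_add_rpow ha r)).const_mul (2 * c * q)
  rw [deriv_mul_sq_add_rpow ha, h2.deriv, show q - 1 - 1 = (q - 1) + (-1) by ring,
    rpow_add hA, rpow_neg_one]
  field_simp
  ring

lemma mul_sq_add_rpow_rpow {C : ℝ} (hC : 0 ≤ C) (ha : 0 < a) (p m : ℝ) :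
    (fun s : ℝ => (C * (s ^ 2 + a) ^ p) ^ m) = fun s => C ^ m * (s ^ 2 + a) ^ (m * p) := by
  funext s
  have hA : 0 < s ^ 2 + a := by positivity
  rw [mul_rpow hC (rpow_nonneg hA.le _), ← rpow_mul hA.le, mul_comm p]

lemma radial_operator_profile_eq {C m : ℝ} (hC : 0 ≤ C) (ha : 0 < a) (p M r : ℝ) :
    deriv (deriv fun s : ℝ => (C * (s ^ 2 + a) ^ p) ^ m) r
        + M * deriv (fun s : ℝ => (C * (s ^ 2 + a) ^ p) ^ m) r
        + C * (r ^ 2 + a) ^ p / (m - 1)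
      = (r ^ 2 + a) ^ (m * p - 1) * (C * (r ^ 2 + a) ^ (p - m * p + 1) / (m - 1)
          + 2 * C ^ m * (m * p) * (1 + r * M + 2 * (m * p - 1) * r ^ 2 / (r ^ 2 + a))) := by
  have hA : 0 < r ^ 2 + a := by positivity
  have h_split : (r ^ 2 + a) ^ p = (r ^ 2 + a) ^ (m * p - 1) * (r ^ 2 + a) ^ (p - m * p + 1) := by
    rw [← rpow_add hA]; ring_nf
  rw [mul_sq_add_rpow_rpow hC ha, radial_operator_mul_sq_add_rpow ha, h_split]
  ring

end Profile

section Weight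

/-- `max(1, r)^{μ+1}`, the growth of the lower bound for `r 𝔪(r)`. -/
noncomputable def radialWeight (μ r : ℝ) : ℝ := max 1 (r ^ 2) ^ ((μ + 1) / 2)

variable {μ : ℝ}

lemma sq_le_radialWeight (hμ : 1 ≤ μ) (r : ℝ) : r ^ 2 ≤ radialWeight μ r :=
  (le_max_right _ _).trans <| self_le_rpow_of_one_le (le_max_left _ _) (by linarith)

lemma rpow_sq_add_le_radialWeight (hμ : -1 ≤ μ) {a : ℝ} (ha : 0 ≤ a) (r : ℝ) :
    (r ^ 2 + a) ^ ((μ + 1) / 2) ≤ (1 + a) ^ ((μ + 1) / 2) * radialWeight μ r := by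
  have hmax : 1 ≤ max 1 (r ^ 2) := le_max_left _ _
  have hle : r ^ 2 + a ≤ (1 + a) * max 1 (r ^ 2) := by
    nlinarith [le_max_right 1 (r ^ 2), mul_le_mul_of_nonneg_left hmax ha]
  rw [radialWeight, ← mul_rpow (by positivity) (by positivity)]
  exact rpow_le_rpow (by positivity) hle (by linarith)

lemma min_one_mul_radialWeight_le {β : ℝ} {𝔪 : ℝ → ℝ}
    (h_small : ∀ r : ℝ, 0 < r → r < 1 → 1 / r ≤ 𝔪 r)
    (h_large : ∀ r : ℝ, 1 ≤ r → β * r ^ μ ≤ 𝔪 r) {r : ℝ} (hr : 0 < r) :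
    min 1 β * radialWeight μ r ≤ r * 𝔪 r := by
  rcases lt_or_ge r 1 with hr1 | hr1
  · have hW : radialWeight μ r = 1 := by
      rw [radialWeight, max_eq_left (by nlinarith), one_rpow]
    have := mul_le_mul_of_nonneg_left (h_small r hr hr1) hr.le
    rw [mul_one_div_cancel hr.ne'] at this
    rw [hW, mul_one]
    exact (min_le_left _ _).trans this
  · have hW : radialWeight μ r = r * r ^ μ := by
      rw [radialWeight, max_eq_right (by nlinarith), ← rpow_natCast, ← rpow_mul hr.le,
        show ((2 : ℕ) : ℝ) * ((μ + 1) / 2) = 1 + μ by push_cast; ring,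
        rpow_add hr, rpow_one]
    have hβr : β * (r * r ^ μ) ≤ r * 𝔪 r := by
      linarith [mul_le_mul_of_nonneg_left (h_large r hr1) hr.le]
    rw [hW]
    exact (mul_le_mul_of_nonneg_right (min_le_right _ _) (by positivity)).trans hβr

lemma rpow_sq_add_div_le_mul_radialWeight {m k C a : ℝ} (hm : 1 < m) (hC : 0 < C)
    (hμ : -1 ≤ μ) (ha : 0 ≤ a) (hC_large : (1 + a) ^ ((μ + 1) / 2) ≤ (m - 1) * k * C ^ (m - 1))
    (r : ℝ) :
    C * (r ^ 2 + a) ^ ((μ + 1) / 2) / (m - 1) ≤ k * C ^ m * radialWeight μ r := by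
  have hW : 0 ≤ radialWeight μ r := rpow_nonneg (zero_le_one.trans (le_max_left _ _)) _
  have hCm : C ^ m = C * C ^ (m - 1) := by
    rw [← rpow_one_add' hC.le (by linarith), add_sub_cancel]
  rw [div_le_iff₀ (by linarith), hCm]
  calc C * (r ^ 2 + a) ^ ((μ + 1) / 2)
      ≤ C * ((m - 1) * k * C ^ (m - 1) * radialWeight μ r) :=
        mul_le_mul_of_nonneg_left ((rpow_sq_add_le_radialWeight hμ ha r).trans
          (mul_le_mul_of_nonneg_right hC_large hW)) hC.le
    _ = _ := by ring

end Weight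

lemma half_mul_le_radial_bracket {γ κ a W M r : ℝ} (hγ : 0 ≤ γ) (ha : 0 < a)
    (h_a : 4 * (γ + 1) ≤ κ * a) (hW : r ^ 2 ≤ W) (hM : κ * W ≤ r * M) :
    κ * W / 2 ≤ 1 + r * M - 2 * (γ + 1) * r ^ 2 / (r ^ 2 + a) := by
  have hfrac : r ^ 2 / (r ^ 2 + a) ≤ W / a :=
    div_le_div₀ ((sq_nonneg r).trans hW) hW ha (by nlinarith)
  have hκW : 2 * (γ + 1) * (W / a) ≤ κ * W / 2 := by
    rw [mul_div_assoc', div_le_div_iff₀ ha two_pos]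
    nlinarith [(sq_nonneg r).trans hW]
  have hloss : 2 * (γ + 1) * r ^ 2 / (r ^ 2 + a) ≤ κ * W / 2 := by
    rw [mul_div_assoc]
    exact (mul_le_mul_of_nonneg_left hfrac (by linarith)).trans hκW
  linarith

/-- Lemma 4.3 (`ell-ssol`) in radial form: on a manifold whose Laplacian of the distance
function satisfies `𝔪(r) ≥ (n-1)/r` near the pole and `𝔪(r) ≥ β r^μ` for `r ≥ 1`, the
radial function `v̄(r) = C (r² + r₀²)^{-(μ-1)/(2(m-1))}` is a supersolution of the
sublinear elliptic equation `-Δ v^m = v/(m-1)`, i.e.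
`(v̄^m)'' + 𝔪 (v̄^m)' + v̄/(m-1) ≤ 0`, for all sufficiently large `r₀` and `C`. -/
theorem stmt_2 (n : ℕ) (hn : 2 ≤ n) (m μ β : ℝ) (hm : 1 < m) (hμ : 1 < μ) (hβ : 0 < β) :
    ∃ r₀ > (0:ℝ), ∃ Cbar > (0:ℝ), ∀ C : ℝ, Cbar ≤ C → ∀ 𝔪 : ℝ → ℝ,
      (∀ r : ℝ, 0 < r → r < 1 → ((n:ℝ) - 1) / r ≤ 𝔪 r) →
      (∀ r : ℝ, 1 ≤ r → β * r ^ μ ≤ 𝔪 r) →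
      ∀ vbar : ℝ → ℝ,
        (vbar = fun s : ℝ => C * (s ^ 2 + r₀ ^ 2) ^ (-(μ - 1) / (2 * (m - 1)))) →
        ∀ r : ℝ, 0 < r →
          deriv (deriv (fun s : ℝ => vbar s ^ m)) r
              + 𝔪 r * deriv (fun s : ℝ => vbar s ^ m) r
              + vbar r / (m - 1) ≤ 0 := by
  have hm1 : 0 < m - 1 := by linarith
  set γ := m * ((μ - 1) / (2 * (m - 1))) with hγ_def
  have hγ : 0 < γ := mul_pos (by linarith) (div_pos (by linarith) (by linarith))
  set κ := min 1 β
  have hκ : 0 < κ := lt_min one_pos hβ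
  set r₀ := √(4 * (γ + 1) / κ)
  have hr₀_sq : 4 * (γ + 1) ≤ κ * r₀ ^ 2 := by
    rw [sq_sqrt (by positivity), mul_div_cancel₀ _ hκ.ne']
  set K := (1 + r₀ ^ 2) ^ ((μ + 1) / 2) / ((m - 1) * (γ * κ))
  refine ⟨r₀, sqrt_pos.mpr (by positivity), K ^ (m - 1)⁻¹, by positivity,
    fun C hCbar 𝔪 h_small h_large vbar hv r hr => ?_⟩
  have hC : 0 < C := lt_of_lt_of_le (by positivity) hCbar
  have hC_large : (1 + r₀ ^ 2) ^ ((μ + 1) / 2) ≤ (m - 1) * (γ * κ) * C ^ (m - 1) := by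
    rw [← div_le_iff₀' (by positivity), ← rpow_inv_le_iff_of_pos (by positivity) hC.le hm1]
    exact hCbar
  have h_small' : ∀ r : ℝ, 0 < r → r < 1 → 1 / r ≤ 𝔪 r := fun r hr hr1 => by
    have hn' : (2 : ℝ) ≤ n := mod_cast hn
    exact (div_le_div_of_nonneg_right (by linarith) hr.le).trans (h_small r hr hr1)
  have h_bracket := half_mul_le_radial_bracket hγ.le (by positivity) hr₀_sq
    (sq_le_radialWeight hμ.le r) (min_one_mul_radialWeight_le h_small' h_large hr)
  have h_reaction := rpow_sq_add_div_le_mul_radialWeight hm hC (by linarith) (sq_nonneg r₀)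
    hC_large r
  subst hv
  beta_reduce
  rw [radial_operator_profile_eq hC.le (by positivity),
    show m * (-(μ - 1) / (2 * (m - 1))) = -γ by ring,
    show -(μ - 1) / (2 * (m - 1)) - -γ + 1 = (μ + 1) / 2 by rw [hγ_def]; field_simp; ring]
  refine mul_nonpos_of_nonneg_of_nonpos (by positivity) ?_
  linear_combination h_reaction + 2 * C ^ m * γ * h_bracket
end

section
/- Let n ≥ 2 be an integer and let m > 1, μ > 1, Q > 0, ε > 0, α > 0, R̲ > 0 be real numbers. Set C_ε := [m·(μ−1)·(n−1)·√(Q+ε)]^{−1/(m−1)}. Then there exists r̄₀ > 0 (independent of δ) such that for every r₀ ≥ r̄₀, every δ > 0, and every function 𝔪 : (0,∞) → ℝ satisfying 𝔪(r) ≤ α/r for all r ∈ (0,R̲) and 𝔪(r) ≤ (n−1)·√(Q+ε)·r^μ for all r ≥ R̲, the function v̲(r) := C_ε·[(r² + r₀²)^{−(μ−1)/2} − δ]₊^{1/(m−1)} satisfies (v̲^m)''(r) + 𝔪(r)·(v̲^m)'(r) + v̲(r)/(m−1) ≥ 0 at every r > 0 where (r² + r₀²)^{−(μ−1)/2} > δ.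 -/
/-!
Write `v̲ = C u₊^p` with `p = 1/(m-1)`, `u = g - δ` and `g(r) = (r² + r₀²)^(-(μ-1)/2)`. Where
`u > 0` we have `v̲^m = C^m u^q` with `q = p + 1 > 1`, and convexity of `t ↦ t^q` gives
`(v̲^m)'' + 𝔪 (v̲^m)' ≥ C^m q u^p (g'' + 𝔪 g')`. The constant `C` is chosen so that
`v̲/(m-1) = C^m q u^p (μ-1) A` with `A = (n-1)√(Q+ε)`, so everything reduces to the inequality
`g'' + 𝔪 g' + (μ-1) A ≥ 0`, which does not involve `δ`. Up to a nonnegative term it reads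
`(1 + 𝔪(r) r) (r² + r₀²)^(-(μ+1)/2) ≤ A`: for `r < R̲` this follows from `𝔪(r) r ≤ α` once
`A r₀² ≥ 1 + α`, and for `r ≥ R̲` from `𝔪(r) r ≤ A r^(μ+1)` and
`(r² / (r² + r₀²))^((μ+1)/2) ≤ r² / (r² + r₀²)`.
-/

open Real Filter Set Topology

section PowerChainRule

variable {u u' : ℝ → ℝ} {u'' q r : ℝ}

lemma deriv_const_mul_rpow_eventuallyEq (c : ℝ) (hq : 1 ≤ q)
    (hu : ∀ᶠ s in 𝓝 r, HasDerivAt u (u' s) s) :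
    deriv (fun s => c * u s ^ q) =ᶠ[𝓝 r] fun s => c * (u' s * q * u s ^ (q - 1)) := by
  filter_upwards [hu] with s hs
  exact ((hs.rpow_const (Or.inr hq)).const_mul c).deriv

lemma hasDerivAt_deriv_const_mul_rpow (c : ℝ) (hq : 1 ≤ q)
    (hu : ∀ᶠ s in 𝓝 r, HasDerivAt u (u' s) s) (hu' : HasDerivAt u' u'' r) (hpos : 0 < u r) :
    HasDerivAt (deriv fun s => c * u s ^ q)
      (c * (u'' * q * u r ^ (q - 1) + u' r * q * (u' r * (q - 1) * u r ^ (q - 1 - 1)))) r := by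
  have h := ((hu'.mul_const q).mul
    (hu.self_of_nhds.rpow_const (p := q - 1) (Or.inl hpos.ne'))).const_mul c
  exact h.congr_of_eventuallyEq (deriv_const_mul_rpow_eventuallyEq c hq hu)

lemma mul_rpow_mul_le_deriv_deriv_add_mul_deriv (k : ℝ) {c : ℝ} (hc : 0 ≤ c) (hq : 1 ≤ q)
    (hu : ∀ᶠ s in 𝓝 r, HasDerivAt u (u' s) s) (hu' : HasDerivAt u' u'' r) (hpos : 0 < u r) :
    c * q * u r ^ (q - 1) * (u'' + k * u' r) ≤
      deriv (deriv fun s => c * u s ^ q) r + k * deriv (fun s => c * u s ^ q) r := by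
  rw [(hasDerivAt_deriv_const_mul_rpow c hq hu hu' hpos).deriv,
    (deriv_const_mul_rpow_eventuallyEq c hq hu).eq_of_nhds]
  have hconvex : 0 ≤ c * q * (q - 1) * u r ^ (q - 1 - 1) * u' r ^ 2 := by
    have := sub_nonneg.mpr hq
    positivity
  linarith

end PowerChainRule

lemma mul_max_rpow_rpow_eventuallyEq {u : ℝ → ℝ} {C p m r : ℝ} (hC : 0 ≤ C)
    (hu : ContinuousAt u r) (hpos : 0 < u r) :
    (fun s => (C * max (u s) 0 ^ p) ^ m) =ᶠ[𝓝 r] fun s => C ^ m * u s ^ (p * m) := by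
  filter_upwards [hu.eventually (lt_mem_nhds hpos)] with s hs
  rw [max_eq_left hs.le, mul_rpow hC (rpow_nonneg hs.le _), ← rpow_mul hs.le]

lemma rpow_neg_one_div_sub_one_rpow_mul_self {K : ℝ} (hK : 0 < K) {m : ℝ} (hm : m ≠ 1) :
    (K ^ (-(1 / (m - 1)))) ^ m * K = K ^ (-(1 / (m - 1))) := by
  have : m - 1 ≠ 0 := sub_ne_zero.mpr hm
  rw [← rpow_mul hK.le, ← rpow_add_one hK.ne']
  congr 1
  field_simp
  ring

lemma subsolution_of_profile {g g' v : ℝ → ℝ} {g'' L m δ k r : ℝ} (hL : 0 < L) (hm : 1 < m)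
    (hg : ∀ᶠ s in 𝓝 r, HasDerivAt g (g' s) s) (hg' : HasDerivAt g' g'' r) (hδ : δ < g r)
    (hprofile : 0 ≤ g'' + k * g' r + L)
    (hv : v = fun s => (m * L) ^ (-(1 / (m - 1))) * max (g s - δ) 0 ^ (1 / (m - 1))) :
    0 ≤ deriv (deriv fun s => v s ^ m) r + k * deriv (fun s => v s ^ m) r + v r / (m - 1) := by
  have hK : 0 < m * L := mul_pos (by linarith) hL
  generalize hC_def : (m * L) ^ (-(1 / (m - 1))) = C at hv
  have hC0 : 0 ≤ C := hC_def ▸ rpow_nonneg hK.le _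
  have hC : C ^ m * (m * L) = C := hC_def ▸ rpow_neg_one_div_sub_one_rpow_mul_self hK hm.ne'
  have hq : 1 / (m - 1) * m - 1 = 1 / (m - 1) := by
    have : m - 1 ≠ 0 := by linarith
    field_simp
    ring
  have hq1 : 1 ≤ 1 / (m - 1) * m := by linarith [one_div_pos.mpr (sub_pos.mpr hm)]
  set u := fun s => g s - δ
  have hu : ∀ᶠ s in 𝓝 r, HasDerivAt u (g' s) s := hg.mono fun s h => h.sub_const δ
  have hur : 0 < u r := sub_pos.mpr hδ
  have hv' : v = fun s => C * max (u s) 0 ^ (1 / (m - 1)) := hv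
  have hw : (fun s => v s ^ m) =ᶠ[𝓝 r] fun s => C ^ m * u s ^ (1 / (m - 1) * m) := by
    rw [hv']
    exact mul_max_rpow_rpow_eventuallyEq hC0 hu.self_of_nhds.continuousAt hur
  have hvr : v r / (m - 1) = C ^ m * (1 / (m - 1) * m) * u r ^ (1 / (m - 1) * m - 1) * L := by
    simp only [hv', hq, max_eq_left hur.le]
    linear_combination (-(u r ^ (1 / (m - 1)) / (m - 1))) * hC
  have hsub := mul_rpow_mul_le_deriv_deriv_add_mul_deriv k (rpow_nonneg hC0 m) hq1 hu hg' hur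
  have hcoef : 0 ≤ C ^ m * (1 / (m - 1) * m) * u r ^ (1 / (m - 1) * m - 1) := by positivity
  rw [hw.deriv.deriv_eq, hw.deriv_eq, hvr]
  linarith [mul_nonneg hcoef hprofile]

lemma hasDerivAt_sq_add_sq_rpow {r₀ : ℝ} (hr₀ : r₀ ≠ 0) (a s : ℝ) :
    HasDerivAt (fun t => (t ^ 2 + r₀ ^ 2) ^ a) (2 * a * s * (s ^ 2 + r₀ ^ 2) ^ (a - 1)) s := by
  have hG : s ^ 2 + r₀ ^ 2 ≠ 0 := by positivity
  convert (((hasDerivAt_pow 2 s).add_const (r₀ ^ 2)).rpow_const (Or.inl hG)) using 1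
  push_cast
  ring

lemma hasDerivAt_mul_sq_add_sq_rpow {r₀ : ℝ} (hr₀ : r₀ ≠ 0) (a s : ℝ) :
    HasDerivAt (fun t => 2 * a * t * (t ^ 2 + r₀ ^ 2) ^ (a - 1))
      (2 * a * (s ^ 2 + r₀ ^ 2) ^ (a - 1) + 4 * a * (a - 1) * s ^ 2 * (s ^ 2 + r₀ ^ 2) ^ (a - 2))
      s := by
  refine (((hasDerivAt_id s).const_mul (2 * a)).mul
    (hasDerivAt_sq_add_sq_rpow hr₀ (a - 1) s)).congr_deriv ?_
  rw [show a - 1 - 1 = a - 2 by ring]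
  simp only [id]
  ring

lemma one_add_mul_mul_rpow_le {A α μ R k r r₀ : ℝ} (hα : 0 ≤ α) (hμ : 1 < μ)
    (hr : 0 < r) (hr₀ : 1 ≤ r₀) (hr₀A : 1 + α ≤ A * r₀ ^ 2)
    (hnear : r < R → k * r ≤ α) (hfar : R ≤ r → k ≤ A * r ^ μ) :
    (1 + k * r) * (r ^ 2 + r₀ ^ 2) ^ (-(μ + 1) / 2) ≤ A := by
  have hA : 0 < A := by nlinarith
  set G := r ^ 2 + r₀ ^ 2 with hG_def
  have hG : 0 < G := by positivity
  have hGinv : G ^ (-(μ + 1) / 2) ≤ G⁻¹ := by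
    rw [← rpow_neg_one]
    exact rpow_le_rpow_of_exponent_le (by nlinarith) (by linarith)
  rcases lt_or_ge r R with hrR | hRr
  · calc (1 + k * r) * G ^ (-(μ + 1) / 2) ≤ (1 + α) * G⁻¹ := by
          gcongr
          · linarith [hnear hrR]
      _ ≤ A := by
          rw [← div_eq_mul_inv, div_le_iff₀ hG, hG_def]
          nlinarith [mul_nonneg hA.le (sq_nonneg r)]
  · have hk : k * r ≤ A * r ^ (μ + 1) := by
      calc k * r ≤ A * r ^ μ * r := by gcongr; exact hfar hRr
        _ = A * r ^ (μ + 1) := by rw [rpow_add_one hr.ne']; ring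
    have hratio : r ^ (μ + 1) * G ^ (-(μ + 1) / 2) ≤ r ^ 2 / G := by
      have hle : r ^ 2 / G ≤ 1 := (div_le_one hG).mpr (by nlinarith)
      calc r ^ (μ + 1) * G ^ (-(μ + 1) / 2) = (r ^ 2 / G) ^ ((μ + 1) / 2) := by
            rw [div_rpow (by positivity) hG.le, ← rpow_natCast_mul hr.le, neg_div,
              rpow_neg hG.le]
            push_cast
            ring_nf
        _ ≤ (r ^ 2 / G) ^ (1 : ℝ) :=
            rpow_le_rpow_of_exponent_ge (by positivity) hle (by linarith)
        _ = r ^ 2 / G := rpow_one _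
    calc (1 + k * r) * G ^ (-(μ + 1) / 2)
        ≤ G⁻¹ + A * (r ^ (μ + 1) * G ^ (-(μ + 1) / 2)) := by
          have := rpow_nonneg hG.le (-(μ + 1) / 2)
          nlinarith
      _ ≤ G⁻¹ + A * (r ^ 2 / G) := by gcongr
      _ ≤ A := by
          rw [inv_eq_one_div, mul_div_assoc', ← add_div, div_le_iff₀ hG, hG_def]
          nlinarith

lemma deriv2_add_mul_deriv_sq_add_sq_rpow_nonneg {a A k r r₀ : ℝ} (ha : a ≤ 0)
    (h : (1 + k * r) * (r ^ 2 + r₀ ^ 2) ^ (a - 1) ≤ A) :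
    0 ≤ 2 * a * (r ^ 2 + r₀ ^ 2) ^ (a - 1) + 4 * a * (a - 1) * r ^ 2 * (r ^ 2 + r₀ ^ 2) ^ (a - 2)
      + k * (2 * a * r * (r ^ 2 + r₀ ^ 2) ^ (a - 1)) - 2 * a * A := by
  have hcurv : 0 ≤ 4 * a * (a - 1) * r ^ 2 * (r ^ 2 + r₀ ^ 2) ^ (a - 2) := by
    have : 0 ≤ 4 * a * (a - 1) := by nlinarith
    positivity
  nlinarith [mul_le_mul_of_nonneg_left h (by linarith : 0 ≤ -2 * a)]

theorem stmt_3_general (n : ℕ) (hn : 2 ≤ n) (m μ Q ε α Rlow : ℝ)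
    (hm : 1 < m) (hμ : 1 < μ) (hQ : 0 < Q) (hε : 0 < ε) (hα : 0 < α) :
    ∃ rbar₀ > (0:ℝ), ∀ r₀ : ℝ, rbar₀ ≤ r₀ → ∀ δ > (0:ℝ), ∀ 𝔪 : ℝ → ℝ,
      (∀ r : ℝ, 0 < r → r < Rlow → 𝔪 r ≤ α / r) →
      (∀ r : ℝ, Rlow ≤ r → 𝔪 r ≤ ((n:ℝ) - 1) * Real.sqrt (Q + ε) * r ^ μ) →
      ∀ vlow : ℝ → ℝ,
        (vlow = fun s : ℝ =>
          (m * (μ - 1) * ((n:ℝ) - 1) * Real.sqrt (Q + ε)) ^ (-(1 / (m - 1))) *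
            (max ((s ^ 2 + r₀ ^ 2) ^ (-(μ - 1) / 2) - δ) 0) ^ (1 / (m - 1))) →
        ∀ r : ℝ, 0 < r → δ < (r ^ 2 + r₀ ^ 2) ^ (-(μ - 1) / 2) →
          0 ≤ deriv (deriv (fun s : ℝ => vlow s ^ m)) r
              + 𝔪 r * deriv (fun s : ℝ => vlow s ^ m) r
              + vlow r / (m - 1) := by
  set A := ((n : ℝ) - 1) * √(Q + ε) with hA_def
  have hA : 0 < A := by
    have : (2 : ℝ) ≤ n := by exact_mod_cast hn
    exact mul_pos (by linarith) (sqrt_pos.mpr (by linarith))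
  refine ⟨max 1 ((1 + α) / A), lt_max_of_lt_left one_pos, ?_⟩
  intro r₀ hr₀ δ _ 𝔪 hnear hfar vlow hv r hr hpos
  have hr₀1 : 1 ≤ r₀ := le_of_max_le_left hr₀
  have hr₀A : 1 + α ≤ A * r₀ ^ 2 := by
    have := (div_le_iff₀' hA).mp (le_of_max_le_right hr₀)
    nlinarith
  have hr₀0 : r₀ ≠ 0 := by positivity
  rw [show m * (μ - 1) * ((n : ℝ) - 1) * √(Q + ε) = m * ((μ - 1) * A) by rw [hA_def]; ring] at hv
  refine subsolution_of_profile (mul_pos (sub_pos.mpr hμ) hA) hm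
    (Eventually.of_forall (hasDerivAt_sq_add_sq_rpow hr₀0 _))
    (hasDerivAt_mul_sq_add_sq_rpow hr₀0 _ r) hpos ?_ hv
  have hbound := one_add_mul_mul_rpow_le hα.le hμ hr hr₀1 hr₀A
    (fun h => (le_div_iff₀ hr).mp (hnear r hr h)) (hfar r)
  rw [show -(μ + 1) / 2 = -(μ - 1) / 2 - 1 by ring] at hbound
  linarith [deriv2_add_mul_deriv_sq_add_sq_rpow_nonneg (by linarith) hbound]

/-- Lemma 4.4 (`lemma-lower`) in radial form: on a manifold whose Laplacian of the distance
function satisfies `𝔪(r) ≤ α/r` near the pole and `𝔪(r) ≤ (n-1)√(Q+ε) r^μ` for `r ≥ R̲`,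
the radial function `v̲(r) = C_ε [(r²+r₀²)^{-(μ-1)/2} − δ]₊^{1/(m-1)}` with
`C_ε = [m(μ-1)(n-1)√(Q+ε)]^{-1/(m-1)}` is a subsolution of the sublinear elliptic equation
`-Δ v^m = v/(m-1)` on its positivity set, for all `r₀` large enough (independently of `δ`). -/
theorem stmt_3 (n : ℕ) (hn : 2 ≤ n) (m μ Q ε α Rlow : ℝ)
    (hm : 1 < m) (hμ : 1 < μ) (hQ : 0 < Q) (hε : 0 < ε) (hα : 0 < α) (hRlow : 0 < Rlow) :
    ∃ rbar₀ > (0:ℝ), ∀ r₀ : ℝ, rbar₀ ≤ r₀ → ∀ δ > (0:ℝ), ∀ 𝔪 : ℝ → ℝ,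
      (∀ r : ℝ, 0 < r → r < Rlow → 𝔪 r ≤ α / r) →
      (∀ r : ℝ, Rlow ≤ r → 𝔪 r ≤ ((n:ℝ) - 1) * Real.sqrt (Q + ε) * r ^ μ) →
      ∀ vlow : ℝ → ℝ,
        (vlow = fun s : ℝ =>
          (m * (μ - 1) * ((n:ℝ) - 1) * Real.sqrt (Q + ε)) ^ (-(1 / (m - 1))) *
            (max ((s ^ 2 + r₀ ^ 2) ^ (-(μ - 1) / 2) - δ) 0) ^ (1 / (m - 1))) →
        ∀ r : ℝ, 0 < r → δ < (r ^ 2 + r₀ ^ 2) ^ (-(μ - 1) / 2) →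
          0 ≤ deriv (deriv (fun s : ℝ => vlow s ^ m)) r
              + 𝔪 r * deriv (fun s : ℝ => vlow s ^ m) r
              + vlow r / (m - 1) :=
  stmt_3_general n hn m μ Q ε α Rlow hm hμ hQ hε hα
end

section
/- Let n ≥ 2 be an integer and m > 1. Let ψ : [0,∞) → [0,∞) be continuous with ψ(0) = 0 and ψ(r) > 0 for r > 0, and let v : (0,∞) → (0,∞) be a bounded, twice continuously differentiable function with lim_{r→∞} v(r) = 0 such that (ψ^{n−1}·(v^m)')'(r) = −ψ(r)^{n−1}·v(r)/(m−1) for all r > 0 and lim_{r→0⁺} ψ(r)^{n−1}·(v^m)'(r) = 0. Then for every r > 0 one has (v^m)'(r) = −(1/((m−1)·ψ(r)^{n−1}))·∫₀^r ψ(s)^{n−1}·v(s) ds, the iterated integral ∫_r^∞ (ψ(t)^{1−n}·∫₀^t ψ(s)^{n−1}·v(s) ds) dt is finite, and v(r)^m = (1/(m−1))·∫_r^∞ (ψ(t)^{1−n}·∫₀^t ψ(s)^{n−1}·v(s) ds) dt. -/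
/-!
Integrating the equation once from the origin, the vanishing flux at `0⁺` turns
`(ψ^{n-1}(v^m)')' = -ψ^{n-1} v/(m-1)` into `ψ^{n-1}(v^m)' = -(1/(m-1)) ∫₀^r ψ^{n-1} v`; the
integral converges because `ψ^{n-1} v` is nonnegative and is, up to a constant, the derivative of
the flux, which has a limit at `0⁺`. Hence `-(m-1) v^m` is nondecreasing with derivative
`ψ^{1-n} ∫₀^t ψ^{n-1} v` and tends to `0` at infinity, so integrating that derivative over
`(r, ∞)` gives `(m-1) v(r)^m`.
-/

open Real Filter Set MeasureTheory Topology

theorem continuousOn_update_Icc_of_tendsto {F f : ℝ → ℝ} {a b L : ℝ}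
    (hderiv : ∀ x ∈ Ioc a b, HasDerivAt F (f x) x) (ha : Tendsto F (𝓝[>] a) (𝓝 L)) :
    ContinuousOn (Function.update F a L) (Icc a b) := by
  intro x hx
  rcases hx.1.eq_or_lt with rfl | hax
  · rw [continuousWithinAt_update_same]
    exact ha.mono_left (nhdsWithin_mono _ fun y hy => lt_of_le_of_ne hy.1.1 (Ne.symm hy.2))
  · refine ((hderiv x ⟨hax, hx.2⟩).continuousAt.congr ?_).continuousWithinAt
    filter_upwards [Ioi_mem_nhds hax] with y hy
    exact (Function.update_of_ne hy.ne' _ _).symm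

/-- No integrability of `f` is assumed: a nonnegative derivative is automatically integrable. -/
theorem integral_eq_sub_of_hasDerivAt_of_nonneg_of_tendsto {F f : ℝ → ℝ} {a b L : ℝ}
    (hab : a < b) (hderiv : ∀ x ∈ Ioc a b, HasDerivAt F (f x) x)
    (hf : ∀ x ∈ Ioo a b, 0 ≤ f x) (ha : Tendsto F (𝓝[>] a) (𝓝 L)) :
    ∫ x in a..b, f x = F b - L := by
  have hcont := continuousOn_update_Icc_of_tendsto hderiv ha
  have hderiv' : ∀ x ∈ Ioo a b, HasDerivAt (Function.update F a L) (f x) x := by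
    intro x hx
    refine (hderiv x (Ioo_subset_Ioc_self hx)).congr_of_eventuallyEq ?_
    filter_upwards [Ioi_mem_nhds hx.1] with y hy
    exact Function.update_of_ne hy.ne' _ _
  have hint : IntervalIntegrable f volume a b :=
    (intervalIntegrable_iff_integrableOn_Ioc_of_le hab.le).2
      (intervalIntegral.integrableOn_deriv_of_nonneg hcont hderiv' hf)
  rw [intervalIntegral.integral_eq_sub_of_hasDerivAt_of_le hab.le hcont hderiv' hint,
    Function.update_of_ne hab.ne', Function.update_self]

section RadialEquation

variable {n : ℕ} {m : ℝ} {ψ v : ℝ → ℝ}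

theorem hasDerivAt_radial_flux (hm : 1 < m) (hψpos : ∀ r : ℝ, 0 < r → 0 < ψ r)
    (hvpos : ∀ r : ℝ, 0 < r → 0 < v r)
    (hode : ∀ r : ℝ, 0 < r →
      deriv (fun x : ℝ => ψ x ^ (n - 1) * deriv (fun y : ℝ => v y ^ m) x) r
        = -(ψ r ^ (n - 1) * v r) / (m - 1)) {r : ℝ} (hr : 0 < r) :
    HasDerivAt (fun x : ℝ => ψ x ^ (n - 1) * deriv (fun y : ℝ => v y ^ m) x)
      (-(ψ r ^ (n - 1) * v r) / (m - 1)) r := by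
  have hsource : 0 < ψ r ^ (n - 1) * v r / (m - 1) := by
    have := hψpos r hr; have := hvpos r hr; have : 0 < m - 1 := by linarith
    positivity
  -- `deriv` is `0` where the function is not differentiable, so a nonzero value forces
  -- differentiability.
  have hne : deriv (fun x : ℝ => ψ x ^ (n - 1) * deriv (fun y : ℝ => v y ^ m) x) r ≠ 0 := by
    rw [hode r hr, neg_div]
    exact neg_ne_zero.2 hsource.ne'
  simpa only [hode r hr] using (differentiableAt_of_deriv_ne_zero hne).hasDerivAt

theorem radial_flux_eq_neg_integral (hm : 1 < m) (hψpos : ∀ r : ℝ, 0 < r → 0 < ψ r)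
    (hvpos : ∀ r : ℝ, 0 < r → 0 < v r)
    (hode : ∀ r : ℝ, 0 < r →
      deriv (fun x : ℝ => ψ x ^ (n - 1) * deriv (fun y : ℝ => v y ^ m) x) r
        = -(ψ r ^ (n - 1) * v r) / (m - 1))
    (hflux : Tendsto (fun r : ℝ => ψ r ^ (n - 1) * deriv (fun y : ℝ => v y ^ m) r)
      (𝓝[>] 0) (𝓝 0)) {r : ℝ} (hr : 0 < r) :
    ψ r ^ (n - 1) * deriv (fun y : ℝ => v y ^ m) r
      = -(1 / (m - 1)) * ∫ s in (0:ℝ)..r, ψ s ^ (n - 1) * v s := by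
  have hm1 : m - 1 ≠ 0 := by linarith
  have hderiv : ∀ x ∈ Ioc (0:ℝ) r, HasDerivAt
      (fun x : ℝ => -(m - 1) * (ψ x ^ (n - 1) * deriv (fun y : ℝ => v y ^ m) x))
      (ψ x ^ (n - 1) * v x) x := fun x hx =>
    ((hasDerivAt_radial_flux hm hψpos hvpos hode hx.1).const_mul (-(m - 1))).congr_deriv
      (by field_simp)
  have hsource : ∀ x ∈ Ioo (0:ℝ) r, 0 ≤ ψ x ^ (n - 1) * v x := fun x hx =>
    mul_nonneg (pow_nonneg (hψpos x hx.1).le _) (hvpos x hx.1).le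
  have hlim := hflux.const_mul (-(m - 1))
  rw [mul_zero] at hlim
  rw [integral_eq_sub_of_hasDerivAt_of_nonneg_of_tendsto hr hderiv hsource hlim]
  field_simp
  ring

theorem deriv_rpow_eq_neg_integral (hm : 1 < m) (hψpos : ∀ r : ℝ, 0 < r → 0 < ψ r)
    (hvpos : ∀ r : ℝ, 0 < r → 0 < v r)
    (hode : ∀ r : ℝ, 0 < r →
      deriv (fun x : ℝ => ψ x ^ (n - 1) * deriv (fun y : ℝ => v y ^ m) x) r
        = -(ψ r ^ (n - 1) * v r) / (m - 1))
    (hflux : Tendsto (fun r : ℝ => ψ r ^ (n - 1) * deriv (fun y : ℝ => v y ^ m) r)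
      (𝓝[>] 0) (𝓝 0)) {r : ℝ} (hr : 0 < r) :
    deriv (fun y : ℝ => v y ^ m) r
      = -(1 / ((m - 1) * ψ r ^ (n - 1))) * ∫ s in (0:ℝ)..r, ψ s ^ (n - 1) * v s := by
  have hψr : ψ r ^ (n - 1) ≠ 0 := (pow_pos (hψpos r hr) _).ne'
  have hm1 : m - 1 ≠ 0 := by linarith
  have hflux_r := radial_flux_eq_neg_integral hm hψpos hvpos hode hflux hr
  rw [← mul_right_inj' hψr, hflux_r]
  field_simp

theorem hasDerivAt_neg_mul_rpow (hm : 1 < m) (hψpos : ∀ r : ℝ, 0 < r → 0 < ψ r)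
    (hvpos : ∀ r : ℝ, 0 < r → 0 < v r) (hvdiff : DifferentiableOn ℝ v (Ioi 0))
    (hode : ∀ r : ℝ, 0 < r →
      deriv (fun x : ℝ => ψ x ^ (n - 1) * deriv (fun y : ℝ => v y ^ m) x) r
        = -(ψ r ^ (n - 1) * v r) / (m - 1))
    (hflux : Tendsto (fun r : ℝ => ψ r ^ (n - 1) * deriv (fun y : ℝ => v y ^ m) r)
      (𝓝[>] 0) (𝓝 0)) {t : ℝ} (ht : 0 < t) :
    HasDerivAt (fun y : ℝ => -((m - 1) * v y ^ m))
      ((∫ s in (0:ℝ)..t, ψ s ^ (n - 1) * v s) / ψ t ^ (n - 1)) t := by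
  have hv : HasDerivAt v (deriv v t) t :=
    (hvdiff.differentiableAt (isOpen_Ioi.mem_nhds ht)).hasDerivAt
  have hvm := (hv.rpow_const (p := m) (Or.inl (hvpos t ht).ne')).differentiableAt.hasDerivAt
  rw [deriv_rpow_eq_neg_integral hm hψpos hvpos hode hflux ht] at hvm
  have hm1 : m - 1 ≠ 0 := by linarith
  have hψt : ψ t ^ (n - 1) ≠ 0 := (pow_pos (hψpos t ht) _).ne'
  exact (hvm.const_mul (m - 1)).neg.congr_deriv (by field_simp)

end RadialEquation

theorem stmt_4_general (n : ℕ) (m : ℝ) (hm : 1 < m)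
    (ψ : ℝ → ℝ)
    (hψpos : ∀ r : ℝ, 0 < r → 0 < ψ r)
    (v : ℝ → ℝ) (hvpos : ∀ r : ℝ, 0 < r → 0 < v r)
    (hvreg : ContDiffOn ℝ 2 v (Set.Ioi 0))
    (hvlim : Filter.Tendsto v Filter.atTop (nhds 0))
    (hode : ∀ r : ℝ, 0 < r →
      deriv (fun x : ℝ => ψ x ^ (n - 1) * deriv (fun y : ℝ => v y ^ m) x) r
        = -(ψ r ^ (n - 1) * v r) / (m - 1))
    (hflux : Filter.Tendsto (fun r : ℝ => ψ r ^ (n - 1) * deriv (fun y : ℝ => v y ^ m) r)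
      (nhdsWithin 0 (Set.Ioi 0)) (nhds 0)) :
    (∀ r : ℝ, 0 < r → deriv (fun y : ℝ => v y ^ m) r
        = -(1 / ((m - 1) * ψ r ^ (n - 1))) * ∫ s in (0:ℝ)..r, ψ s ^ (n - 1) * v s) ∧
    (∀ r : ℝ, 0 < r → MeasureTheory.IntegrableOn
        (fun t : ℝ => (∫ s in (0:ℝ)..t, ψ s ^ (n - 1) * v s) / ψ t ^ (n - 1)) (Set.Ioi r)) ∧
    (∀ r : ℝ, 0 < r → v r ^ m = (1 / (m - 1)) *
        ∫ t in Set.Ioi r, (∫ s in (0:ℝ)..t, ψ s ^ (n - 1) * v s) / ψ t ^ (n - 1)) := by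
  have hderiv := fun t (ht : 0 < t) => hasDerivAt_neg_mul_rpow hm hψpos hvpos
    (hvreg.differentiableOn (by norm_num)) hode hflux ht
  have hnonneg : ∀ t : ℝ, 0 < t →
      0 ≤ (∫ s in (0:ℝ)..t, ψ s ^ (n - 1) * v s) / ψ t ^ (n - 1) := fun t ht => by
    refine div_nonneg ?_ (pow_nonneg (hψpos t ht).le _)
    rw [intervalIntegral.integral_of_le ht.le]
    exact setIntegral_nonneg measurableSet_Ioc fun s hs =>
      mul_nonneg (pow_nonneg (hψpos s hs.1).le _) (hvpos s hs.1).le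
  have hlim : Tendsto (fun y : ℝ => -((m - 1) * v y ^ m)) atTop (𝓝 0) := by
    have := ((continuousAt_rpow_const 0 m (Or.inr (by linarith))).tendsto.comp hvlim).const_mul
      (m - 1) |>.neg
    simpa [zero_rpow (by linarith : m ≠ 0)] using this
  refine ⟨fun r hr => deriv_rpow_eq_neg_integral hm hψpos hvpos hode hflux hr,
    fun r hr => integrableOn_Ioi_deriv_of_nonneg (hderiv r hr).continuousAt.continuousWithinAt
      (fun t ht => hderiv t (hr.trans ht)) (fun t ht => hnonneg t (hr.trans ht)) hlim,
    fun r hr => ?_⟩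
  rw [integral_Ioi_of_hasDerivAt_of_nonneg (hderiv r hr).continuousAt.continuousWithinAt
    (fun t ht => hderiv t (hr.trans ht)) (fun t ht => hnonneg t (hr.trans ht)) hlim]
  field_simp [(by linarith : m - 1 ≠ 0)]
  ring

/-- Integrated form of the radial sublinear elliptic equation on a model manifold
(identities (4.13)-(4.14) of the paper): a positive bounded `C²` radial solution `v`
of `(ψ^{n-1}(v^m)')' = -ψ^{n-1} v/(m-1)` vanishing at infinity and with vanishing flux
at the origin satisfies
`(v^m)'(r) = -(1/((m-1)ψ(r)^{n-1})) ∫₀^r ψ^{n-1} v` and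
`v(r)^m = (1/(m-1)) ∫_r^∞ ψ(t)^{1-n} (∫₀^t ψ^{n-1} v) dt`, the latter integral being finite. -/
theorem stmt_4 (n : ℕ) (hn : 2 ≤ n) (m : ℝ) (hm : 1 < m)
    (ψ : ℝ → ℝ) (hψcont : ContinuousOn ψ (Set.Ici 0)) (hψ0 : ψ 0 = 0)
    (hψ0' : ∀ r : ℝ, 0 ≤ ψ r)
    (hψpos : ∀ r : ℝ, 0 < r → 0 < ψ r)
    (v : ℝ → ℝ) (hvpos : ∀ r : ℝ, 0 < r → 0 < v r)
    (hvbdd : ∃ B : ℝ, ∀ r : ℝ, 0 < r → v r ≤ B)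
    (hvreg : ContDiffOn ℝ 2 v (Set.Ioi 0))
    (hvlim : Filter.Tendsto v Filter.atTop (nhds 0))
    (hode : ∀ r : ℝ, 0 < r →
      deriv (fun x : ℝ => ψ x ^ (n - 1) * deriv (fun y : ℝ => v y ^ m) x) r
        = -(ψ r ^ (n - 1) * v r) / (m - 1))
    (hflux : Filter.Tendsto (fun r : ℝ => ψ r ^ (n - 1) * deriv (fun y : ℝ => v y ^ m) r)
      (nhdsWithin 0 (Set.Ioi 0)) (nhds 0)) :
    (∀ r : ℝ, 0 < r → deriv (fun y : ℝ => v y ^ m) r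
        = -(1 / ((m - 1) * ψ r ^ (n - 1))) * ∫ s in (0:ℝ)..r, ψ s ^ (n - 1) * v s) ∧
    (∀ r : ℝ, 0 < r → MeasureTheory.IntegrableOn
        (fun t : ℝ => (∫ s in (0:ℝ)..t, ψ s ^ (n - 1) * v s) / ψ t ^ (n - 1)) (Set.Ioi r)) ∧
    (∀ r : ℝ, 0 < r → v r ^ m = (1 / (m - 1)) *
        ∫ t in Set.Ioi r, (∫ s in (0:ℝ)..t, ψ s ^ (n - 1) * v s) / ψ t ^ (n - 1)) :=
  stmt_4_general n m hm ψ hψpos v hvpos hvreg hvlim hode hflux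
end

section
/- Let n ≥ 2 be an integer and let m > 1, μ > 1, Q > 0. Let ψ : [0,∞) → [0,∞) be continuous, positive on (0,∞), continuously differentiable on (0,∞), with lim_{r→∞} ψ(r) = +∞ and lim_{r→∞} ψ'(r)/(r^μ·ψ(r)) = √Q. Let v : (0,∞) → (0,∞) be bounded and continuous with lim_{r→∞} v(r) = 0, satisfying the integral identity v(r)^m = (1/(m−1))·∫_r^∞ (ψ(t)^{1−n}·∫₀^t ψ(s)^{n−1}·v(s) ds) dt for all r > 0 (with all integrals finite). If limsup_{r→∞} r^{(μ−1)/(m−1)}·v(r) is finite, then limsup_{r→∞} r^{(μ−1)/(m−1)}·v(r) ≤ [m·(μ−1)·(n−1)·√Q]^{−1/(m−1)}. -/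
/-!
Let `L` be the limsup, `α = (μ - 1)/(m - 1)`, and fix `ε > 0`, so that eventually
`v ≤ (L + ε) t^{-α}`. The weight `G = ψ^{n-1} t^{-(α+μ)}` has logarithmic derivative
`(n - 1) ψ'/ψ - (α + μ)/t ≈ (n - 1)√Q t^μ`, hence
`ψ^{n-1} v ≤ (L + ε) t^μ G ≲ (L + ε) G' / ((n - 1)√Q)`; as `G → ∞`, integrating gives
`∫₀^t ψ^{n-1} v ≲ (L + ε) G(t) / ((n - 1)√Q)`. Dividing by `ψ^{n-1}` and integrating
`t^{-(α+μ)}` over `(r, ∞)` in the identity gives `(r^α v)^m ≲ (L + ε)/((n - 1)√Q (μ - 1) m)`.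
Letting `ε → 0`, `L^m ≤ L / (m (μ - 1)(n - 1)√Q)`, which is the claim.
-/

open Real Filter Set MeasureTheory Topology

theorem hasDerivAt_pow_mul_rpow {ψ : ℝ → ℝ} {t : ℝ} (k : ℕ) (p : ℝ) (ht : 0 < t)
    (hψt : ψ t ≠ 0) (hψ : DifferentiableAt ℝ ψ t) :
    HasDerivAt (fun s => ψ s ^ k * s ^ p)
      ((k * (deriv ψ t / ψ t) + p / t) * (ψ t ^ k * t ^ p)) t := by
  refine ((hψ.hasDerivAt.pow k).mul (hasDerivAt_rpow_const (Or.inl ht.ne'))).congr_deriv ?_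
  rw [rpow_sub_one ht.ne']
  simp only [Pi.pow_apply]
  cases k with
  | zero => simp only [CharP.cast_eq_zero, zero_mul, zero_add, pow_zero, one_mul]; ring
  | succ k => field_simp; push_cast; ring

theorem tendsto_atTop_of_le_deriv {G G' : ℝ → ℝ} {t₀ : ℝ} (hG₀ : 0 < G t₀)
    (hG : ∀ t ≥ t₀, HasDerivAt G (G' t) t) (hle : ∀ t ≥ t₀, G t ≤ G' t) :
    Tendsto G atTop atTop := by
  have hderiv : ∀ t ≥ t₀, HasDerivAt (fun s => G s * exp (-s)) ((G' t - G t) * exp (-t)) t :=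
    fun t ht => ((hG t ht).mul (hasDerivAt_neg t).exp).congr_deriv (by ring)
  have hmono : MonotoneOn (fun s => G s * exp (-s)) (Ici t₀) := by
    refine monotoneOn_of_deriv_nonneg (convex_Ici t₀)
      (fun t ht => (hderiv t ht).continuousAt.continuousWithinAt)
      (fun t ht => ?_) (fun t ht => ?_) <;> rw [interior_Ici] at ht
    · exact (hderiv t ht.le).differentiableAt.differentiableWithinAt
    · rw [(hderiv t ht.le).deriv]
      exact mul_nonneg (sub_nonneg.2 (hle t ht.le)) (exp_nonneg _)
  refine tendsto_atTop_mono' atTop ?_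
    (tendsto_exp_atTop.const_mul_atTop (mul_pos hG₀ (exp_pos (-t₀))))
  filter_upwards [eventually_ge_atTop t₀] with t ht
  calc G t₀ * exp (-t₀) * exp t ≤ G t * exp (-t) * exp t := by
        exact mul_le_mul_of_nonneg_right (hmono (mem_Ici.2 le_rfl) ht ht) (exp_pos t).le
    _ = G t := by rw [mul_assoc, ← exp_add, neg_add_cancel, exp_zero, mul_one]

theorem setIntegral_Ioc_le_add_sub_of_le_deriv {f g g' : ℝ → ℝ} {a b t : ℝ} (hab : a < b)
    (hbt : b ≤ t) (hf : IntegrableOn f (Ioc a t)) (hg : ∀ x ∈ Icc b t, HasDerivAt g (g' x) x)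
    (hfg : ∀ x ∈ Icc b t, f x ≤ g' x) :
    ∫ x in Ioc a t, f x ≤ (∫ x in Ioc a b, f x) + (g t - g b) := by
  rw [← Ioc_union_Ioc_eq_Ioc hab.le hbt, setIntegral_union (Ioc_disjoint_Ioc_of_le le_rfl)
    measurableSet_Ioc (hf.mono_set (Ioc_subset_Ioc_right hbt))
    (hf.mono_set (Ioc_subset_Ioc_left hab.le)), ← intervalIntegral.integral_of_le hbt]
  have := intervalIntegral.integral_le_sub_of_hasDeriv_right_of_le hbt
    (fun x hx => (hg x hx).continuousAt.continuousWithinAt)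
    (fun x hx => (hg x (Ioo_subset_Icc_self hx)).hasDerivWithinAt)
    (hf.mono_set fun x hx => ⟨hab.trans_le hx.1, hx.2⟩)
    (fun x hx => hfg x (Ioo_subset_Icc_self hx))
  linarith

theorem eventually_le_add_mul_of_le_add_mul_sub {I G : ℝ → ℝ} {c δ t₀ : ℝ}
    (hG : Tendsto G atTop atTop) (hδ : 0 < δ) (hI : ∀ t ≥ t₀, I t ≤ I t₀ + c * (G t - G t₀)) :
    ∀ᶠ t in atTop, I t ≤ (c + δ) * G t := by
  filter_upwards [(hG.const_mul_atTop hδ).eventually_ge_atTop (I t₀ - c * G t₀),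
    eventually_ge_atTop t₀] with t hδG ht
  linarith [hI t ht]

theorem setIntegral_Ioi_le_of_le_rpow {h : ℝ → ℝ} {C p r : ℝ} (hp : p < -1) (hr : 0 < r)
    (hh : IntegrableOn h (Ioi r)) (hle : ∀ t > r, h t ≤ C * t ^ p) :
    ∫ t in Ioi r, h t ≤ C * (-r ^ (p + 1) / (p + 1)) := by
  rw [← integral_Ioi_rpow_of_lt hp hr, ← integral_const_mul]
  exact setIntegral_mono_on hh ((integrableOn_Ioi_rpow_of_lt hp hr).const_mul C)
    measurableSet_Ioi hle

theorem limsup_rpow_le_of_eventually_rpow_le {f : ℝ → ℝ} {m D : ℝ} (hm : 0 < m)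
    (hf : ∀ᶠ r in atTop, 0 ≤ f r) (hD : ∀ᶠ r in atTop, f r ^ m ≤ D) :
    limsup f atTop ^ m ≤ D := by
  obtain ⟨r, hr0, hrD⟩ := (hf.and hD).exists
  have hD0 : 0 ≤ D := (rpow_nonneg hr0 m).trans hrD
  have hfD : ∀ᶠ r in atTop, f r ≤ D ^ m⁻¹ := by
    filter_upwards [hf, hD] with r hr0 hrD
    calc f r = (f r ^ m) ^ m⁻¹ := by rw [← rpow_mul hr0, mul_inv_cancel₀ hm.ne', rpow_one]
      _ ≤ D ^ m⁻¹ := by gcongr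
  have hL0 : 0 ≤ limsup f atTop := le_limsup_of_frequently_le hf.frequently ⟨_, hfD⟩
  calc limsup f atTop ^ m ≤ (D ^ m⁻¹) ^ m := by
        gcongr; exact limsup_le_of_le (isCoboundedUnder_le_of_eventually_le _ hf) hfD
    _ = D := by rw [← rpow_mul hD0, inv_mul_cancel₀ hm.ne', rpow_one]

theorem le_div_div_of_forall_mem_Ioo {x L A K : ℝ} (hA : 0 < A)
    (h : ∀ ε ∈ Ioo (0 : ℝ) 1, x ≤ ((L + ε) / ((1 - ε) * A) + ε) / K) : x ≤ L / A / K := by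
  have hcont : ContinuousAt (fun ε => ((L + ε) / ((1 - ε) * A) + ε) / K) 0 := by
    fun_prop (disch := simp [hA.ne'])
  have hlimit := hcont.tendsto.mono_left (nhdsWithin_le_nhds (s := Ioi 0))
  simp only [add_zero, sub_zero, one_mul] at hlimit
  exact ge_of_tendsto hlimit (by filter_upwards [Ioo_mem_nhdsGT one_pos] using h)

theorem le_rpow_neg_inv_of_rpow_le_div {L m X : ℝ} (hL : 0 ≤ L) (hm : 1 < m) (hX : 0 < X)
    (h : L ^ m ≤ L / X) : L ≤ X ^ (-(1 / (m - 1))) := by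
  rcases hL.eq_or_lt with rfl | hL
  · positivity
  have hm1 : 0 < m - 1 := sub_pos.2 hm
  have hLX : L ^ (m - 1) ≤ X⁻¹ := by
    rw [rpow_sub_one hL.ne', div_le_iff₀ hL, ← div_eq_inv_mul]; exact h
  calc L = (L ^ (m - 1)) ^ (1 / (m - 1)) := by
        rw [← rpow_mul hL.le, mul_one_div_cancel hm1.ne', rpow_one]
    _ ≤ X⁻¹ ^ (1 / (m - 1)) := by gcongr
    _ = X ^ (-(1 / (m - 1))) := by rw [inv_rpow hX.le, rpow_neg hX.le]

theorem eventually_mul_rpow_le_of_tendsto_deriv_div {ψ : ℝ → ℝ} {μ q k b : ℝ} (K : ℝ)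
    (hψ : ∀ r : ℝ, 0 < r → 0 < ψ r)
    (hratio : Tendsto (fun r => deriv ψ r / (r ^ μ * ψ r)) atTop (𝓝 q))
    (hμ : -1 < μ) (hk : 0 < k) (hb : b < k * q) :
    ∀ᶠ t in atTop, b * t ^ μ ≤ k * (deriv ψ t / ψ t) + K / t := by
  obtain ⟨b', hbb', hb'q⟩ := exists_between hb
  have hratio' : ∀ᶠ t in atTop, b' / k < deriv ψ t / (t ^ μ * ψ t) :=
    hratio.eventually (lt_mem_nhds (by rwa [div_lt_iff₀' hk]))
  have hpow : ∀ᶠ t in atTop, |K| ≤ (b' - b) * t ^ (μ + 1) :=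
    ((tendsto_rpow_atTop (by linarith)).const_mul_atTop (by linarith)).eventually_ge_atTop _
  filter_upwards [hratio', hpow, eventually_gt_atTop 0] with t hratio' hpow ht
  have hψt := hψ t ht
  have htμ := rpow_pos_of_pos ht μ
  have hlog : b' * t ^ μ ≤ k * (deriv ψ t / ψ t) := by
    rw [div_lt_div_iff₀ hk (by positivity)] at hratio'
    rw [← mul_div_assoc, le_div_iff₀ hψt]
    linarith
  have hK : -((b' - b) * t ^ μ) ≤ K / t := by
    rw [le_div_iff₀ ht]
    calc -((b' - b) * t ^ μ) * t = -((b' - b) * t ^ (μ + 1)) := by rw [rpow_add_one ht.ne']; ring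
      _ ≤ K := by linarith [neg_abs_le K]
  linarith

/-- `∫_{B_t} v` up to the area of the unit sphere: `ψ^{n-1}` is the area density of the model. -/
noncomputable def ballIntegral (n : ℕ) (ψ v : ℝ → ℝ) (t : ℝ) : ℝ :=
  ∫ s in Ioc 0 t, ψ s ^ (n - 1) * v s

theorem eventually_ballIntegral_le {n : ℕ} {ψ v : ℝ → ℝ} {μ p M b δ : ℝ}
    (hψpos : ∀ r : ℝ, 0 < r → 0 < ψ r) (hψdiff : ∀ r : ℝ, 0 < r → DifferentiableAt ℝ ψ r)
    (hint : ∀ t : ℝ, 0 < t → IntegrableOn (fun s => ψ s ^ (n - 1) * v s) (Ioc 0 t))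
    (hμ : 0 < μ) (hM : 0 ≤ M) (hb : 0 < b) (hδ : 0 < δ)
    (hv : ∀ᶠ t in atTop, v t ≤ M * t ^ (μ + p))
    (hlog : ∀ᶠ t in atTop, b * t ^ μ ≤ (n - 1 : ℕ) * (deriv ψ t / ψ t) + p / t) :
    ∀ᶠ t in atTop, ballIntegral n ψ v t ≤ (M / b + δ) * (ψ t ^ (n - 1) * t ^ p) := by
  set G := fun t => ψ t ^ (n - 1) * t ^ p
  set G' := fun t => ((n - 1 : ℕ) * (deriv ψ t / ψ t) + p / t) * G t
  have hGpos : ∀ t : ℝ, 0 < t → 0 < G t := fun t ht =>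
    mul_pos (pow_pos (hψpos t ht) _) (rpow_pos_of_pos ht _)
  have hpow : ∀ᶠ t in atTop, 1 ≤ b * t ^ μ :=
    ((tendsto_rpow_atTop hμ).const_mul_atTop hb).eventually_ge_atTop 1
  obtain ⟨t₀, ht₀⟩ :=
    eventually_atTop.1 (hv.and (hlog.and (hpow.and (eventually_gt_atTop 0))))
  have ht₀pos : 0 < t₀ := (ht₀ t₀ le_rfl).2.2.2
  have hG : ∀ t ≥ t₀, HasDerivAt G (G' t) t := fun t ht =>
    hasDerivAt_pow_mul_rpow _ _ (ht₀pos.trans_le ht) (hψpos t (ht₀pos.trans_le ht)).ne'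
      (hψdiff t (ht₀pos.trans_le ht))
  have hGG' : ∀ t ≥ t₀, b * t ^ μ * G t ≤ G' t := fun t ht =>
    mul_le_mul_of_nonneg_right (ht₀ t ht).2.1 (hGpos t (ht₀pos.trans_le ht)).le
  have hvG : ∀ t ≥ t₀, ψ t ^ (n - 1) * v t ≤ M / b * G' t := fun t ht => by
    have htpos := ht₀pos.trans_le ht
    calc ψ t ^ (n - 1) * v t ≤ ψ t ^ (n - 1) * (M * t ^ (μ + p)) :=
          mul_le_mul_of_nonneg_left (ht₀ t ht).1 (pow_pos (hψpos t htpos) _).le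
      _ = M / b * (b * t ^ μ * G t) := by simp only [G]; rw [rpow_add htpos]; field_simp
      _ ≤ M / b * G' t := mul_le_mul_of_nonneg_left (hGG' t ht) (by positivity)
  have hI : ∀ t ≥ t₀, ballIntegral n ψ v t ≤ ballIntegral n ψ v t₀ + M / b * (G t - G t₀) :=
    fun t ht => by
      rw [mul_sub]
      exact setIntegral_Ioc_le_add_sub_of_le_deriv ht₀pos ht (hint t (ht₀pos.trans_le ht))
        (fun x hx => (hG x hx.1).const_mul (M / b)) (fun x hx => hvG x hx.1)
  refine eventually_le_add_mul_of_le_add_mul_sub (tendsto_atTop_of_le_deriv (hGpos t₀ ht₀pos) hG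
    fun t ht => ?_) hδ hI
  calc G t = 1 * G t := (one_mul _).symm
    _ ≤ b * t ^ μ * G t :=
      mul_le_mul_of_nonneg_right (ht₀ t ht).2.2.1 (hGpos t (ht₀pos.trans_le ht)).le
    _ ≤ G' t := hGG' t ht

theorem eventually_rpow_mul_rpow_le {n : ℕ} {ψ v : ℝ → ℝ} {m μ C : ℝ} (hm : 1 < m)
    (hμ : 1 < μ) (hψpos : ∀ r : ℝ, 0 < r → 0 < ψ r) (hvpos : ∀ r : ℝ, 0 < r → 0 < v r)
    (hint : ∀ r : ℝ, 0 < r →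
      IntegrableOn (fun t => ballIntegral n ψ v t / ψ t ^ (n - 1)) (Ioi r))
    (hid : ∀ r : ℝ, 0 < r →
      v r ^ m = 1 / (m - 1) * ∫ t in Ioi r, ballIntegral n ψ v t / ψ t ^ (n - 1))
    (hI : ∀ᶠ t in atTop,
      ballIntegral n ψ v t ≤ C * (ψ t ^ (n - 1) * t ^ (-((μ - 1) / (m - 1) + μ)))) :
    ∀ᶠ r in atTop, (r ^ ((μ - 1) / (m - 1)) * v r) ^ m ≤ C / ((μ - 1) * m) := by
  set α := (μ - 1) / (m - 1) with hα
  have hm1 : 0 < m - 1 := sub_pos.2 hm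
  have hαm : -(α + μ) + 1 = -(α * m) := by rw [hα]; field_simp; ring
  have hp : -(α + μ) < -1 := by have : 0 < α := div_pos (by linarith) hm1; linarith
  obtain ⟨r₀, hr₀⟩ := eventually_atTop.1 hI
  filter_upwards [eventually_ge_atTop r₀, eventually_gt_atTop 0] with r hr hr0
  have htail := setIntegral_Ioi_le_of_le_rpow (C := C) hp hr0 (hint r hr0) fun t ht => by
    have hψt := pow_pos (hψpos t (hr0.trans ht)) (n - 1)
    rw [div_le_iff₀ hψt]
    linarith [hr₀ t (hr.trans ht.le)]
  calc (r ^ α * v r) ^ m = r ^ (α * m) * v r ^ m := by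
        rw [mul_rpow (rpow_nonneg hr0.le _) (hvpos r hr0).le, ← rpow_mul hr0.le]
    _ = r ^ (α * m) * (1 / (m - 1) * ∫ t in Ioi r, ballIntegral n ψ v t / ψ t ^ (n - 1)) := by
        rw [hid r hr0]
    _ ≤ r ^ (α * m) * (1 / (m - 1) * (C * (-r ^ (-(α + μ) + 1) / (-(α + μ) + 1)))) := by
        gcongr
    _ = C / ((μ - 1) * m) := by
        rw [hαm, rpow_neg hr0.le, hα]
        field_simp

theorem stmt_7_general (n : ℕ) (hn : 2 ≤ n) (m μ Q : ℝ)
    (hm : 1 < m) (hμ : 1 < μ) (hQ : 0 < Q)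
    (ψ : ℝ → ℝ)
    (hψpos : ∀ r : ℝ, 0 < r → 0 < ψ r)
    (hψreg : ContDiffOn ℝ 1 ψ (Set.Ioi 0))
    (hψratio : Filter.Tendsto (fun r : ℝ => deriv ψ r / (r ^ μ * ψ r)) Filter.atTop
      (nhds (Real.sqrt Q)))
    (v : ℝ → ℝ) (hvpos : ∀ r : ℝ, 0 < r → 0 < v r)
    (hint1 : ∀ t : ℝ, 0 < t →
      MeasureTheory.IntegrableOn (fun s : ℝ => ψ s ^ (n - 1) * v s) (Set.Ioc 0 t))
    (hint2 : ∀ r : ℝ, 0 < r → MeasureTheory.IntegrableOn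
      (fun t : ℝ => (∫ s in Set.Ioc (0:ℝ) t, ψ s ^ (n - 1) * v s) / ψ t ^ (n - 1))
      (Set.Ioi r))
    (hid : ∀ r : ℝ, 0 < r → v r ^ m = (1 / (m - 1)) *
      ∫ t in Set.Ioi r, (∫ s in Set.Ioc (0:ℝ) t, ψ s ^ (n - 1) * v s) / ψ t ^ (n - 1))
    (hfin : Filter.IsBoundedUnder (· ≤ ·) Filter.atTop
      (fun r : ℝ => r ^ ((μ - 1) / (m - 1)) * v r)) :
    Filter.limsup (fun r : ℝ => r ^ ((μ - 1) / (m - 1)) * v r) Filter.atTop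
      ≤ (m * (μ - 1) * ((n:ℝ) - 1) * Real.sqrt Q) ^ (-(1 / (m - 1))) := by
  set α := (μ - 1) / (m - 1)
  set A := ((n : ℝ) - 1) * √Q with hA_def
  set L := limsup (fun r => r ^ α * v r) atTop
  have hk : ((n - 1 : ℕ) : ℝ) = n - 1 := by rw [Nat.cast_sub (by omega), Nat.cast_one]
  have hn1 : 0 < (n : ℝ) - 1 := by rw [← hk]; exact_mod_cast Nat.sub_pos_of_lt hn
  have hA : 0 < A := mul_pos hn1 (sqrt_pos.2 hQ)
  have hf0 : ∀ᶠ r in atTop, 0 ≤ r ^ α * v r := by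
    filter_upwards [eventually_gt_atTop 0] with r hr
    exact mul_nonneg (rpow_nonneg hr.le _) (hvpos r hr).le
  have hL0 : 0 ≤ L := le_limsup_of_frequently_le hf0.frequently hfin
  have hψdiff : ∀ r : ℝ, 0 < r → DifferentiableAt ℝ ψ r := fun r hr =>
    (hψreg.differentiableOn one_ne_zero).differentiableAt (isOpen_Ioi.mem_nhds hr)
  have hε : ∀ ε ∈ Ioo (0 : ℝ) 1, L ^ m ≤ ((L + ε) / ((1 - ε) * A) + ε) / ((μ - 1) * m) := by
    rintro ε ⟨hε0, hε1⟩
    have hv : ∀ᶠ t in atTop, v t ≤ (L + ε) * t ^ (μ + -(α + μ)) := by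
      filter_upwards [eventually_lt_of_limsup_lt (lt_add_of_pos_right L hε0) hfin,
        eventually_gt_atTop 0] with t hLt ht
      rw [show μ + -(α + μ) = -α by ring, rpow_neg ht.le, ← div_eq_mul_inv,
        le_div_iff₀ (rpow_pos_of_pos ht _), mul_comm]
      exact hLt.le
    have hlog := eventually_mul_rpow_le_of_tendsto_deriv_div (k := ((n - 1 : ℕ) : ℝ))
      (b := (1 - ε) * A) (-(α + μ)) hψpos hψratio (by linarith) (by rwa [hk])
      (by rw [hk]; nlinarith)
    exact limsup_rpow_le_of_eventually_rpow_le (by linarith) hf0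
      (eventually_rpow_mul_rpow_le hm hμ hψpos hvpos hint2 hid
        (eventually_ballIntegral_le hψpos hψdiff hint1 (by linarith) (by linarith)
          (by nlinarith) hε0 hv hlog))
  refine le_rpow_neg_inv_of_rpow_le_div hL0 hm (by positivity)
    ((le_div_div_of_forall_mem_Ioo hA hε).trans_eq ?_)
  rw [div_div, hA_def]
  ring

/-- Sharp asymptotic upper bound of Theorem 2.2 (i) on model manifolds: a positive bounded
solution `v` (vanishing at infinity) of the integrated radial sublinear elliptic equation
on a model manifold with `ψ'(r)/(r^μ ψ(r)) → √Q`, whose limsup `r^{(μ-1)/(m-1)} v(r)` is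
finite, satisfies `limsup r^{(μ-1)/(m-1)} v(r) ≤ [m(μ-1)(n-1)√Q]^{-1/(m-1)}`. -/
theorem stmt_7 (n : ℕ) (hn : 2 ≤ n) (m μ Q : ℝ)
    (hm : 1 < m) (hμ : 1 < μ) (hQ : 0 < Q)
    (ψ : ℝ → ℝ) (hψcont : ContinuousOn ψ (Set.Ici 0)) (hψnn : ∀ r : ℝ, 0 ≤ ψ r)
    (hψpos : ∀ r : ℝ, 0 < r → 0 < ψ r)
    (hψreg : ContDiffOn ℝ 1 ψ (Set.Ioi 0))
    (hψinf : Filter.Tendsto ψ Filter.atTop Filter.atTop)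
    (hψratio : Filter.Tendsto (fun r : ℝ => deriv ψ r / (r ^ μ * ψ r)) Filter.atTop
      (nhds (Real.sqrt Q)))
    (v : ℝ → ℝ) (hvpos : ∀ r : ℝ, 0 < r → 0 < v r)
    (hvcont : ContinuousOn v (Set.Ioi 0))
    (hvbdd : ∃ B : ℝ, ∀ r : ℝ, 0 < r → v r ≤ B)
    (hvlim : Filter.Tendsto v Filter.atTop (nhds 0))
    (hint1 : ∀ t : ℝ, 0 < t →
      MeasureTheory.IntegrableOn (fun s : ℝ => ψ s ^ (n - 1) * v s) (Set.Ioc 0 t))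
    (hint2 : ∀ r : ℝ, 0 < r → MeasureTheory.IntegrableOn
      (fun t : ℝ => (∫ s in Set.Ioc (0:ℝ) t, ψ s ^ (n - 1) * v s) / ψ t ^ (n - 1))
      (Set.Ioi r))
    (hid : ∀ r : ℝ, 0 < r → v r ^ m = (1 / (m - 1)) *
      ∫ t in Set.Ioi r, (∫ s in Set.Ioc (0:ℝ) t, ψ s ^ (n - 1) * v s) / ψ t ^ (n - 1))
    (hfin : Filter.IsBoundedUnder (· ≤ ·) Filter.atTop
      (fun r : ℝ => r ^ ((μ - 1) / (m - 1)) * v r)) :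
    Filter.limsup (fun r : ℝ => r ^ ((μ - 1) / (m - 1)) * v r) Filter.atTop
      ≤ (m * (μ - 1) * ((n:ℝ) - 1) * Real.sqrt Q) ^ (-(1 / (m - 1))) :=
  stmt_7_general n hn m μ Q hm hμ hQ ψ hψpos hψreg hψratio v hvpos hint1 hint2 hid hfin
end

section
/- Let m > 1, μ > 1 and β > 0. Then there exist positive constants r̄₀ and k, and for each r₀ ≥ r̄₀ a constant C̄ > 0, such that for every C ≥ C̄, every t₀ > 1 and every γ > 0 with γ^{(μ+1)/(μ−1)} ≤ k·C^{1−m}, the function ū(r,t) := C·(t+t₀)^{−1/(m−1)}·[(r+r₀)^{−(μ−1)} − γ·(log(t+t₀))^{−(μ−1)/(μ+1)}]₊^{1/(m−1)} satisfies ∂_t ū(r,t) ≥ ∂²_r(ū^m)(r,t) + β·r^μ·∂_r(ū^m)(r,t) at every point (r,t) with r ≥ 1, t > 0 and (r+r₀)^{−(μ−1)} > γ·(log(t+t₀))^{−(μ−1)/(μ+1)}. -/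
/-!
Put `x = r + r₀`, `p = 1/(m-1)`, `ℓ = log (t+t₀)` and let `G` be the bracket. Both sides of the
inequality carry the positive factor `C p (t+t₀)^(-p-1) G^(p-1)`; without it the claim reads

    C^(m-1) m (μ-1) [μ x^(-μ-1) G + p (μ-1) x^(-2μ) - β r^μ x^(-μ) G]
      ≤ γ (μ-1)/(μ+1) ℓ^(-2μ/(μ+1)) - G.

Half of the drift term `β r^μ x^(-μ) G` absorbs `-G` once `C^(m-1) ≥ 2 (1+r₀)^μ / (m (μ-1) β)`,
since `r^μ x^(-μ) ≥ (1+r₀)^(-μ)` for `r ≥ 1`. Where `G ≥ x^(1-μ)/2`, the other half absorbs the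
diffusion terms once `r₀` is large. Near the free boundary, `G < x^(1-μ)/2` means
`x^(1-μ) < 2γ ℓ^(-(μ-1)/(μ+1))`; raising this to the power `2μ/(μ-1)` bounds `x^(-2μ)` by
`ℓ^(-2μ/(μ+1))`, so the time derivative of the logarithmic factor absorbs the diffusion terms
when `γ^((μ+1)/(μ-1)) ≤ k C^(1-m)`.
-/

open Filter Topology

noncomputable def barrierBracket (μ r₀ t₀ γ r t : ℝ) : ℝ :=
  (r + r₀) ^ (-(μ - 1)) - γ * Real.log (t + t₀) ^ (-(μ - 1) / (μ + 1))

noncomputable def barrier (m μ r₀ C t₀ γ r t : ℝ) : ℝ :=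
  C * (t + t₀) ^ (-1 / (m - 1)) * max (barrierBracket μ r₀ t₀ γ r t) 0 ^ (1 / (m - 1))

noncomputable def barrierGammaConst (m μ : ℝ) : ℝ :=
  (μ - 1) / (μ + 1) / (2 ^ (2 * μ / (μ - 1)) * (m * (μ - 1) * (μ + 1 / (m - 1) * (μ - 1))))

theorem one_le_rpow_mul_rpow_mul_rpow_neg {μ r r₀ : ℝ} (hμ : 0 ≤ μ) (hr : 1 ≤ r) (hr₀ : 0 ≤ r₀) :
    1 ≤ (1 + r₀) ^ μ * (r ^ μ * (r + r₀) ^ (-μ)) := by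
  have hx : 0 < r + r₀ := by linarith
  have hle : (r + r₀) ^ μ ≤ ((1 + r₀) * r) ^ μ :=
    Real.rpow_le_rpow hx.le (by nlinarith) hμ
  rw [Real.mul_rpow (by linarith) (by linarith)] at hle
  calc (1 : ℝ) = (r + r₀) ^ μ * (r + r₀) ^ (-μ) := by
        rw [← Real.rpow_add hx, add_neg_cancel, Real.rpow_zero]
    _ ≤ (1 + r₀) ^ μ * r ^ μ * (r + r₀) ^ (-μ) := by gcongr
    _ = _ := by ring

theorem diffusion_sub_drift_le_gain_sub_decay {A B E x Y G c₁ c₂ : ℝ} (hA : 0 ≤ A) (hx : 0 < x)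
    (hY : 0 ≤ Y) (hG : 0 ≤ G) (hGle : G ≤ x * Y) (hc₁ : 0 ≤ c₁) (hc₂ : 0 ≤ c₂)
    (hdrift : 2 ≤ A * B * Y) (hfar : 2 * (c₁ + 2 * c₂) ≤ B * x)
    (hnear : G < x * Y / 2 → A * (c₁ + c₂) * Y ^ 2 ≤ E) (hE : 0 ≤ E) :
    A * (c₁ * (Y / x) * G + c₂ * Y ^ 2 - B * Y * G) ≤ E - G := by
  have hdriftG : 2 * G ≤ A * B * Y * G := by nlinarith
  rcases le_or_gt (x * Y / 2) G with hfarG | hnearG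
  · have hYx : Y ≤ 2 * G / x := by rw [le_div_iff₀ hx]; linarith
    have hdiff : c₁ * (Y / x) * G + c₂ * Y ^ 2 ≤ B * Y * G / 2 :=
      calc c₁ * (Y / x) * G + c₂ * Y ^ 2 ≤ c₁ * (Y / x) * G + c₂ * Y * (2 * G / x) := by
            nlinarith [mul_le_mul_of_nonneg_left hYx (mul_nonneg hc₂ hY)]
        _ = (c₁ + 2 * c₂) / x * (Y * G) := by field_simp
        _ ≤ B / 2 * (Y * G) := by
            refine mul_le_mul_of_nonneg_right ?_ (mul_nonneg hY hG)
            rw [div_le_iff₀ hx]; linarith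
        _ = B * Y * G / 2 := by ring
    nlinarith [mul_le_mul_of_nonneg_left hdiff hA]
  · have hGx : (Y / x) * G ≤ Y ^ 2 := by
      rw [div_mul_eq_mul_div, div_le_iff₀ hx]; nlinarith
    nlinarith [hnear hnearG, mul_le_mul_of_nonneg_left hGx (mul_nonneg hA hc₁)]

theorem sq_rpow_neg_le_of_rpow_neg_lt {μ x γ ℓ : ℝ} (hμ : 1 < μ) (hx : 0 < x) (hγ : 0 < γ)
    (hℓ : 0 < ℓ) (h : x ^ (-(μ - 1)) < 2 * γ * ℓ ^ (-(μ - 1) / (μ + 1))) :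
    (x ^ (-μ)) ^ 2 ≤
      2 ^ (2 * μ / (μ - 1)) * γ ^ ((μ + 1) / (μ - 1)) * γ * ℓ ^ (-(μ - 1) / (μ + 1) - 1) := by
  have hμ1 : μ - 1 ≠ 0 := by linarith
  have hμ2 : μ + 1 ≠ 0 := by linarith
  have hpow := Real.rpow_le_rpow (by positivity) h.le (by positivity : 0 ≤ 2 * μ / (μ - 1))
  calc (x ^ (-μ)) ^ 2 = (x ^ (-(μ - 1))) ^ (2 * μ / (μ - 1)) := by
        rw [← Real.rpow_mul hx.le, ← Real.rpow_natCast, ← Real.rpow_mul hx.le]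
        congr 1; field_simp; push_cast; ring
    _ ≤ (2 * γ * ℓ ^ (-(μ - 1) / (μ + 1))) ^ (2 * μ / (μ - 1)) := hpow
    _ = _ := by
        rw [Real.mul_rpow (by positivity) (by positivity), Real.mul_rpow (by positivity) hγ.le,
          ← Real.rpow_mul hℓ.le, mul_assoc (2 ^ (2 * μ / (μ - 1))) (γ ^ ((μ + 1) / (μ - 1))) γ,
          ← Real.rpow_add_one hγ.ne']
        congr 3 <;> field_simp <;> ring

theorem diffusion_le_time_gain {m μ C γ x ℓ : ℝ} (hm : 1 < m) (hμ : 1 < μ) (hC : 0 < C)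
    (hγ : 0 < γ) (hx : 0 < x) (hℓ : 0 < ℓ)
    (hγk : γ ^ ((μ + 1) / (μ - 1)) ≤ barrierGammaConst m μ * C ^ (1 - m))
    (h : x ^ (-(μ - 1)) < 2 * γ * ℓ ^ (-(μ - 1) / (μ + 1))) :
    C ^ (m - 1) * m * (μ - 1) * (μ + 1 / (m - 1) * (μ - 1)) * (x ^ (-μ)) ^ 2 ≤
      γ * ((μ - 1) / (μ + 1)) * ℓ ^ (-(μ - 1) / (μ + 1) - 1) := by
  have hm1 : 0 < m - 1 := by linarith
  have hμ1 : 0 < μ - 1 := by linarith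
  set M := m * (μ - 1) * (μ + 1 / (m - 1) * (μ - 1))
  have hM : 0 < M := by positivity
  have hCC : C ^ (m - 1) * C ^ (1 - m) = 1 := by
    rw [← Real.rpow_add hC]; norm_num
  calc C ^ (m - 1) * m * (μ - 1) * (μ + 1 / (m - 1) * (μ - 1)) * (x ^ (-μ)) ^ 2
      = C ^ (m - 1) * M * (x ^ (-μ)) ^ 2 := by ring
    _ ≤ C ^ (m - 1) * M * (2 ^ (2 * μ / (μ - 1)) * (barrierGammaConst m μ * C ^ (1 - m)) * γ *
          ℓ ^ (-(μ - 1) / (μ + 1) - 1)) := by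
        gcongr
        exact (sq_rpow_neg_le_of_rpow_neg_lt hμ hx hγ hℓ h).trans (by gcongr)
    _ = C ^ (m - 1) * C ^ (1 - m) * (M * 2 ^ (2 * μ / (μ - 1)) * barrierGammaConst m μ) *
          (γ * ℓ ^ (-(μ - 1) / (μ + 1) - 1)) := by ring
    _ = γ * ((μ - 1) / (μ + 1)) * ℓ ^ (-(μ - 1) / (μ + 1) - 1) := by
        rw [hCC, barrierGammaConst]
        simp only [M]
        field_simp

section
variable {μ r₀ t₀ γ : ℝ}

theorem hasDerivAt_barrierBracket_space {s : ℝ} (t : ℝ) (hs : 0 < s + r₀) :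
    HasDerivAt (fun s => barrierBracket μ r₀ t₀ γ s t) (-(μ - 1) * (s + r₀) ^ (-μ)) s := by
  refine ((((hasDerivAt_id s).add_const r₀).rpow_const (Or.inl hs.ne')).sub_const
    (γ * Real.log (t + t₀) ^ (-(μ - 1) / (μ + 1)))).congr_deriv ?_
  rw [show -(μ - 1) - 1 = -μ by ring, id, one_mul]

theorem hasDerivAt_barrierBracket_time (r : ℝ) {t : ℝ} (ht : 1 < t + t₀) :
    HasDerivAt (fun τ => barrierBracket μ r₀ t₀ γ r τ)
      (γ * ((μ - 1) / (μ + 1)) * Real.log (t + t₀) ^ (-(μ - 1) / (μ + 1) - 1) / (t + t₀)) t := by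
  have hlog := ((hasDerivAt_id t).add_const t₀).log (by simp; linarith)
  refine ((hlog.rpow_const (Or.inl (Real.log_pos ht).ne')).const_mul γ).const_sub
    ((r + r₀) ^ (-(μ - 1))) |>.congr_deriv ?_
  simp only [id]; ring

theorem hasDerivAt_barrierBracket_rpow_space {s : ℝ} (t q : ℝ) (hs : 0 < s + r₀)
    (hG : 0 < barrierBracket μ r₀ t₀ γ s t) :
    HasDerivAt (fun s => barrierBracket μ r₀ t₀ γ s t ^ q)
      (-(q * (μ - 1)) * ((s + r₀) ^ (-μ) * barrierBracket μ r₀ t₀ γ s t ^ (q - 1))) s :=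
  ((hasDerivAt_barrierBracket_space t hs).rpow_const (Or.inl hG.ne')).congr_deriv (by ring)

theorem hasDerivAt_rpow_mul_barrierBracket_rpow_space {s : ℝ} (t p : ℝ) (hs : 0 < s + r₀)
    (hG : 0 < barrierBracket μ r₀ t₀ γ s t) :
    HasDerivAt (fun s => (s + r₀) ^ (-μ) * barrierBracket μ r₀ t₀ γ s t ^ p)
      (-(μ * ((s + r₀) ^ (-μ) / (s + r₀)) * barrierBracket μ r₀ t₀ γ s t ^ p +
        p * (μ - 1) * ((s + r₀) ^ (-μ)) ^ 2 * barrierBracket μ r₀ t₀ γ s t ^ (p - 1))) s := by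
  have hY := ((hasDerivAt_id s).add_const r₀).rpow_const (p := -μ) (Or.inl hs.ne')
  refine (hY.mul (hasDerivAt_barrierBracket_rpow_space t p hs hG)).congr_deriv ?_
  rw [id, Real.rpow_sub_one hs.ne']; ring

end

section
variable {m μ r₀ C t₀ γ : ℝ}

theorem barrier_rpow_eq {r t : ℝ} (hm : 1 < m) (hC : 0 ≤ C) (hT : 0 < t + t₀)
    (hG : 0 < barrierBracket μ r₀ t₀ γ r t) :
    barrier m μ r₀ C t₀ γ r t ^ m =
      (C * (t + t₀) ^ (-1 / (m - 1))) ^ m * barrierBracket μ r₀ t₀ γ r t ^ (1 / (m - 1) + 1) := by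
  have hm' : m - 1 ≠ 0 := by linarith
  rw [barrier, max_eq_left hG.le, Real.mul_rpow (by positivity) (by positivity),
    ← Real.rpow_mul hG.le]
  congr 2
  field_simp
  ring

theorem hasDerivAt_barrier_time (r : ℝ) {t : ℝ} (ht : 1 < t + t₀)
    (hG : 0 < barrierBracket μ r₀ t₀ γ r t) :
    HasDerivAt (fun τ => barrier m μ r₀ C t₀ γ r τ)
      (C * (1 / (m - 1)) * ((t + t₀) ^ (-1 / (m - 1)) / (t + t₀)) *
        barrierBracket μ r₀ t₀ γ r t ^ (1 / (m - 1) - 1) *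
        (γ * ((μ - 1) / (μ + 1)) * Real.log (t + t₀) ^ (-(μ - 1) / (μ + 1) - 1) -
          barrierBracket μ r₀ t₀ γ r t)) t := by
  have hT : 0 < t + t₀ := by linarith
  have hbr := hasDerivAt_barrierBracket_time (μ := μ) (r₀ := r₀) (γ := γ) r ht
  have hpos : ∀ᶠ τ in 𝓝 t, 0 < barrierBracket μ r₀ t₀ γ r τ :=
    hbr.continuousAt.eventually (eventually_gt_nhds hG)
  have hEq : (fun τ => barrier m μ r₀ C t₀ γ r τ) =ᶠ[𝓝 t]
      fun τ => C * (τ + t₀) ^ (-1 / (m - 1)) * barrierBracket μ r₀ t₀ γ r τ ^ (1 / (m - 1)) := by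
    filter_upwards [hpos] with τ hτ
    rw [barrier, max_eq_left hτ.le]
  have hTpow := ((hasDerivAt_id t).add_const t₀).rpow_const (p := -1 / (m - 1)) (Or.inl hT.ne')
  refine (((hTpow.const_mul C).mul (hbr.rpow_const (p := 1 / (m - 1)) (Or.inl hG.ne'))).congr_deriv
    ?_).congr_of_eventuallyEq hEq
  rw [id, Real.rpow_sub_one hT.ne', Real.rpow_sub_one hG.ne']
  field_simp
  ring

theorem barrier_radial_operator_eq (β : ℝ) {r t : ℝ} (hm : 1 < m) (hC : 0 ≤ C) (hx : 0 < r + r₀)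
    (hT : 0 < t + t₀) (hG : 0 < barrierBracket μ r₀ t₀ γ r t) :
    deriv (deriv fun s => barrier m μ r₀ C t₀ γ s t ^ m) r +
        β * r ^ μ * deriv (fun s => barrier m μ r₀ C t₀ γ s t ^ m) r =
      (C * (t + t₀) ^ (-1 / (m - 1))) ^ m * ((1 / (m - 1) + 1) * (μ - 1)) *
        (μ * ((r + r₀) ^ (-μ) / (r + r₀)) * barrierBracket μ r₀ t₀ γ r t ^ (1 / (m - 1)) +
          1 / (m - 1) * (μ - 1) * ((r + r₀) ^ (-μ)) ^ 2 *
            barrierBracket μ r₀ t₀ γ r t ^ (1 / (m - 1) - 1) -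
          β * r ^ μ * (r + r₀) ^ (-μ) * barrierBracket μ r₀ t₀ γ r t ^ (1 / (m - 1))) := by
  set K := (C * (t + t₀) ^ (-1 / (m - 1))) ^ m
  set p := 1 / (m - 1)
  have hnear : ∀ᶠ s in 𝓝 r, 0 < s + r₀ ∧ 0 < barrierBracket μ r₀ t₀ γ s t :=
    ((continuous_add_const r₀).continuousAt.eventually (eventually_gt_nhds hx)).and
      ((hasDerivAt_barrierBracket_space t hx).continuousAt.eventually (eventually_gt_nhds hG))
  have hEq : (fun s => barrier m μ r₀ C t₀ γ s t ^ m) =ᶠ[𝓝 r]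
      fun s => K * barrierBracket μ r₀ t₀ γ s t ^ (p + 1) := by
    filter_upwards [hnear] with s hs
    exact barrier_rpow_eq hm hC hT hs.2
  have hderiv : deriv (fun s => barrier m μ r₀ C t₀ γ s t ^ m) =ᶠ[𝓝 r]
      fun s => K * -((p + 1) * (μ - 1)) * ((s + r₀) ^ (-μ) * barrierBracket μ r₀ t₀ γ s t ^ p) := by
    filter_upwards [hEq.deriv, hnear] with s hs hs'
    rw [hs, ((hasDerivAt_barrierBracket_rpow_space t (p + 1) hs'.1 hs'.2).const_mul K).deriv,
      add_sub_cancel_right, mul_assoc]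
  rw [(((hasDerivAt_rpow_mul_barrierBracket_rpow_space t p hx hG).const_mul _).congr_of_eventuallyEq
    hderiv).deriv, hderiv.eq_of_nhds]
  ring

end

theorem barrier_supersolution_at {m μ β r₀ C t₀ γ r t : ℝ} (hm : 1 < m) (hμ : 1 < μ) (hβ : 0 < β)
    (hγ : 0 < γ) (hC : 0 < C) (hr : 1 ≤ r)
    (hr₀ : 2 * (μ + 2 * (1 / (m - 1) * (μ - 1))) / β ≤ r₀)
    (hCm : 2 * (1 + r₀) ^ μ / (m * (μ - 1) * β) ≤ C ^ (m - 1))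
    (hγk : γ ^ ((μ + 1) / (μ - 1)) ≤ barrierGammaConst m μ * C ^ (1 - m))
    (ht : 1 < t + t₀) (hG : 0 < barrierBracket μ r₀ t₀ γ r t) :
    deriv (deriv fun s => barrier m μ r₀ C t₀ γ s t ^ m) r +
        β * r ^ μ * deriv (fun s => barrier m μ r₀ C t₀ γ s t ^ m) r ≤
      deriv (fun τ => barrier m μ r₀ C t₀ γ r τ) t := by
  have hm1 : 0 < m - 1 := by linarith
  have hμ1 : 0 < μ - 1 := by linarith
  have hr₀0 : 0 ≤ r₀ := le_trans (by positivity) hr₀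
  have hx : 0 < r + r₀ := by linarith
  have hT : 0 < t + t₀ := by linarith
  have hℓ : 0 < Real.log (t + t₀) := Real.log_pos ht
  set p := 1 / (m - 1)
  set G := barrierBracket μ r₀ t₀ γ r t with hG_def
  set Y := (r + r₀) ^ (-μ)
  set L := Real.log (t + t₀) ^ (-(μ - 1) / (μ + 1) - 1)
  have hXY : (r + r₀) ^ (-(μ - 1)) = (r + r₀) * Y := by
    rw [show -(μ - 1) = -μ + 1 by ring, Real.rpow_add_one hx.ne', mul_comm]
  have hGle : G ≤ (r + r₀) * Y := by
    rw [← hXY, hG_def, barrierBracket]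
    have : 0 < γ * Real.log (t + t₀) ^ (-(μ - 1) / (μ + 1)) := by positivity
    linarith
  have hdrift : 2 ≤ C ^ (m - 1) * m * (μ - 1) * (β * r ^ μ) * Y := by
    have h1 := one_le_rpow_mul_rpow_mul_rpow_neg (by linarith : 0 ≤ μ) hr hr₀0
    rw [div_le_iff₀ (by positivity)] at hCm
    nlinarith [mul_le_mul_of_nonneg_right hCm (by positivity : 0 ≤ r ^ μ * Y)]
  have hfar : 2 * (μ + 2 * (p * (μ - 1))) ≤ β * r ^ μ * (r + r₀) := by
    rw [div_le_iff₀ hβ] at hr₀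
    have : 1 * r₀ ≤ r ^ μ * (r + r₀) :=
      mul_le_mul (Real.one_le_rpow hr (by linarith)) (by linarith) hr₀0 (by positivity)
    nlinarith
  have hnear : G < (r + r₀) * Y / 2 →
      C ^ (m - 1) * m * (μ - 1) * (μ + p * (μ - 1)) * Y ^ 2 ≤ γ * ((μ - 1) / (μ + 1)) * L := by
    intro hGsmall
    refine diffusion_le_time_gain hm hμ hC hγ hx hℓ hγk ?_
    rw [hG_def, barrierBracket, hXY] at hGsmall
    rw [hXY]
    linarith
  have key := diffusion_sub_drift_le_gain_sub_decay (by positivity) hx (by positivity) hG.le hGle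
    (by linarith) (by positivity) hdrift hfar hnear (by positivity)
  rw [barrier_radial_operator_eq β hm hC.le hx hT hG, (hasDerivAt_barrier_time r ht hG).deriv]
  calc _ = C * p * ((t + t₀) ^ (-1 / (m - 1)) / (t + t₀)) * G ^ (p - 1) *
        (C ^ (m - 1) * m * (μ - 1) * (μ * (Y / (r + r₀)) * G + p * (μ - 1) * Y ^ 2 -
          β * r ^ μ * Y * G)) := by
        have hpref : (C * (t + t₀) ^ (-1 / (m - 1))) ^ m * (p + 1) =
            C ^ (m - 1) * m * (C * p * ((t + t₀) ^ (-1 / (m - 1)) / (t + t₀))) := by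
          rw [Real.mul_rpow hC.le (by positivity), ← Real.rpow_mul hT.le,
            show -1 / (m - 1) * m = -1 / (m - 1) - 1 by field_simp; ring,
            Real.rpow_sub_one hT.ne', Real.rpow_sub_one hC.ne']
          simp only [p]
          field_simp
          ring
        have hGp : G ^ p = G ^ (p - 1) * G := by
          rw [Real.rpow_sub_one hG.ne']; field_simp
        rw [hGp]
        linear_combination (μ - 1) * G ^ (p - 1) *
          (μ * (Y / (r + r₀)) * G + p * (μ - 1) * Y ^ 2 - β * r ^ μ * Y * G) * hpref
    _ ≤ C * p * ((t + t₀) ^ (-1 / (m - 1)) / (t + t₀)) * G ^ (p - 1) *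
        (γ * ((μ - 1) / (μ + 1)) * L - G) := by
        gcongr
    _ = _ := by ring

/-- Supersolution part of the proof of Theorem 2.5: the explicit barrier
`ū(r,t) = C (t+t₀)^{-1/(m-1)} [(r+r₀)^{-(μ-1)} − γ (log(t+t₀))^{-(μ-1)/(μ+1)}]₊^{1/(m-1)}`
is a supersolution of the radial porous medium equation
`u_t = (u^m)_{rr} + β r^μ (u^m)_r` in the region `r ≥ 1`, `t > 0` where its bracket is
positive, provided `r₀ ≥ r̄₀`, `C ≥ C̄` and `γ^{(μ+1)/(μ-1)} ≤ k C^{1-m}`. -/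
theorem stmt_8 (m μ β : ℝ) (hm : 1 < m) (hμ : 1 < μ) (hβ : 0 < β) :
    ∃ rbar₀ > (0:ℝ), ∃ k > (0:ℝ), ∀ r₀ : ℝ, rbar₀ ≤ r₀ → ∃ Cbar > (0:ℝ),
      ∀ C : ℝ, Cbar ≤ C → ∀ t₀ : ℝ, 1 < t₀ → ∀ γ : ℝ, 0 < γ →
        γ ^ ((μ + 1) / (μ - 1)) ≤ k * C ^ (1 - m) →
        ∀ U : ℝ → ℝ → ℝ,
          (U = fun r t => C * (t + t₀) ^ (-1 / (m - 1)) *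
            (max ((r + r₀) ^ (-(μ - 1))
              - γ * (Real.log (t + t₀)) ^ (-(μ - 1) / (μ + 1))) 0) ^ (1 / (m - 1))) →
          ∀ r : ℝ, 1 ≤ r → ∀ t : ℝ, 0 < t →
            γ * (Real.log (t + t₀)) ^ (-(μ - 1) / (μ + 1)) < (r + r₀) ^ (-(μ - 1)) →
            deriv (deriv (fun s : ℝ => U s t ^ m)) r
                + β * r ^ μ * deriv (fun s : ℝ => U s t ^ m) r
              ≤ deriv (fun τ : ℝ => U r τ) t := by
  have hm1 : 0 < m - 1 := by linarith
  have hμ1 : 0 < μ - 1 := by linarith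
  have hrbar : 0 < 2 * (μ + 2 * (1 / (m - 1) * (μ - 1))) / β := by positivity
  refine ⟨_, hrbar, barrierGammaConst m μ, by unfold barrierGammaConst; positivity, ?_⟩
  intro r₀ hr₀
  have hCm : 0 < 2 * (1 + r₀) ^ μ / (m * (μ - 1) * β) := by
    have : 0 < 1 + r₀ := by linarith
    positivity
  refine ⟨_, Real.rpow_pos_of_pos hCm (1 / (m - 1)), ?_⟩
  intro C hC t₀ ht₀ γ hγ hγk U hU r hr t ht hreg
  subst hU
  have hCpow : 2 * (1 + r₀) ^ μ / (m * (μ - 1) * β) ≤ C ^ (m - 1) := by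
    have := Real.rpow_le_rpow (by positivity) hC hm1.le
    rwa [← Real.rpow_mul hCm.le, one_div_mul_cancel hm1.ne', Real.rpow_one] at this
  exact barrier_supersolution_at hm hμ hβ hγ ((Real.rpow_pos_of_pos hCm _).trans_le hC) hr hr₀
    hCpow hγk (by linarith) (sub_pos.2 hreg)
end

section
/- Let n ≥ 3 be an integer and let m > 1, ν > 1, K₁, K₂ > 0 with K₁ ≤ K₂. Let ρ : ℝⁿ → (0,∞) be a measurable function satisfying K₁·|x|^{−2}·(log|x|)^{−ν} ≤ ρ(x) ≤ K₂·|x|^{−2}·(log|x|)^{−ν} for all |x| ≥ 2. Then there exist constants C₂ > 0, γ₂ > 0, R₀ > 2 and t₀ > e such that the function ū(x,t) := C₂·(t+t₀)^{−1/(m−1)}·[(log|x|)^{−(ν−1)} − γ₂·(log(t+t₀))^{−(ν−1)}]₊^{1/(m−1)} satisfies ρ(x)·∂_t ū(x,t) ≥ Δ_x(ū^m)(x,t) at every point (x,t) with |x| > R₀, t > 0 and (log|x|)^{−(ν−1)} > γ₂·(log(t+t₀))^{−(ν−1)}. -/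
open Real Filter Set MeasureTheory

/-- The Euclidean Laplacian of a scalar function, as the sum of second directional
derivatives along the standard orthonormal basis of `ℝⁿ`. -/
noncomputable def euclideanLaplacian (n : ℕ) (φ : EuclideanSpace ℝ (Fin n) → ℝ)
    (x : EuclideanSpace ℝ (Fin n)) : ℝ :=
  ∑ i : Fin n, fderiv ℝ (fun y => fderiv ℝ φ y (EuclideanSpace.single i 1)) x
    (EuclideanSpace.single i 1)

/-!
Put `s = log ‖x‖`, `ℓ = log (t + t₀)`, `p = 1/(m-1)`, `S = s^(-ν)` and
`B = s^(-(ν-1)) - γ ℓ^(-(ν-1)) > 0`. Then `ū^m = C^m (t+t₀)^(-(p+1)) B^(p+1)` depends on `x` only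
through `s`, and for such functions `Δ = (∂ₛ² + (n-2) ∂ₛ) / ‖x‖²`. With
`C^(m-1) = 4K₂/(m(ν-1)(n-2))`, dividing both sides by `C p (t+t₀)^(-(p+1)) B^(p-1) / ‖x‖²` leaves
`4K₂/(n-2) · (p(ν-1)S² + (ν/s - (n-2)) B S) ≤ ρ ‖x‖² (γ(ν-1)ℓ^(-ν) - B)`,
where `K₁ S ≤ ρ ‖x‖² ≤ K₂ S`. For large `s` the left side is at most `K₂ S (θS - 2B)`,
`θ = 4p(ν-1)/(n-2)`. Where `B ≥ θS` this is at most `-K₂ S B`, which the right side beats. Near the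
free boundary, `B < θS` forces `κ ℓ ≤ s` for `γ = κ^(-(ν-1))/2`, so the time-derivative term
`γ(ν-1)ℓ^(-ν)` is at least `(ν-1)κ/2 · S = (θ + K₂θ/K₁) S`, and then `ρ ‖x‖² ≥ K₁ S` makes the
right side at least `K₂θS²`.
-/

open scoped Topology RealInnerProductSpace

section RadialCalculus

variable {E : Type*} [NormedAddCommGroup E] [InnerProductSpace ℝ E]

theorem HasDerivAt.hasFDerivAt_comp_norm_sq {g : ℝ → ℝ} {g' : ℝ} {x : E}
    (hg : HasDerivAt g g' (‖x‖ ^ 2)) :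
    HasFDerivAt (fun y => g (‖y‖ ^ 2)) ((2 * g') • innerSL ℝ x) x :=
  (hg.comp_hasFDerivAt x (hasStrictFDerivAt_norm_sq x).hasFDerivAt).congr_fderiv <| by
    ext; simp; ring

theorem fderiv_fderiv_comp_norm_sq_apply {φ : E → ℝ} {g g' : ℝ → ℝ} {g'' : ℝ} {x : E} (v : E)
    (hφ : φ =ᶠ[𝓝 x] fun y => g (‖y‖ ^ 2))
    (hg : ∀ᶠ q in 𝓝 (‖x‖ ^ 2), HasDerivAt g (g' q) q) (hg' : HasDerivAt g' g'' (‖x‖ ^ 2)) :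
    fderiv ℝ (fun y => fderiv ℝ φ y v) x v =
      4 * g'' * ⟪x, v⟫ ^ 2 + 2 * g' (‖x‖ ^ 2) * ‖v‖ ^ 2 := by
  have hnorm : Tendsto (fun y : E => ‖y‖ ^ 2) (𝓝 x) (𝓝 (‖x‖ ^ 2)) :=
    (continuous_norm.pow 2).continuousAt
  have hfirst : (fun y => fderiv ℝ φ y v) =ᶠ[𝓝 x] fun y => 2 * g' (‖y‖ ^ 2) * ⟪v, y⟫ := by
    filter_upwards [hnorm.eventually hg, hφ.eventuallyEq_nhds] with y hy hφy
    rw [hφy.fderiv_eq, hy.hasFDerivAt_comp_norm_sq.fderiv]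
    simp [real_inner_comm]
  have hsecond : HasFDerivAt (fun y => 2 * g' (‖y‖ ^ 2) * ⟪v, y⟫) _ x :=
    (hg'.hasFDerivAt_comp_norm_sq.const_mul 2).mul (innerSL ℝ v).hasFDerivAt
  rw [hfirst.fderiv_eq, hsecond.fderiv]
  simp [real_inner_comm]
  ring

end RadialCalculus

theorem euclideanLaplacian_of_eventuallyEq_comp_norm_sq {n : ℕ}
    {φ : EuclideanSpace ℝ (Fin n) → ℝ} {g g' : ℝ → ℝ} {g'' : ℝ} {x : EuclideanSpace ℝ (Fin n)}
    (hφ : φ =ᶠ[𝓝 x] fun y => g (‖y‖ ^ 2))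
    (hg : ∀ᶠ q in 𝓝 (‖x‖ ^ 2), HasDerivAt g (g' q) q) (hg' : HasDerivAt g' g'' (‖x‖ ^ 2)) :
    euclideanLaplacian n φ x = 4 * ‖x‖ ^ 2 * g'' + 2 * n * g' (‖x‖ ^ 2) := by
  simp only [euclideanLaplacian, fderiv_fderiv_comp_norm_sq_apply _ hφ hg hg',
    EuclideanSpace.inner_single_right, PiLp.norm_single, Finset.sum_add_distrib]
  simp [← Finset.mul_sum, ← EuclideanSpace.real_norm_sq_eq x]
  ring

theorem euclideanLaplacian_of_eventuallyEq_comp_log_norm {n : ℕ}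
    {φ : EuclideanSpace ℝ (Fin n) → ℝ} {h h' : ℝ → ℝ} {h'' : ℝ} {x : EuclideanSpace ℝ (Fin n)}
    (hx : x ≠ 0) (hφ : φ =ᶠ[𝓝 x] fun y => h (log ‖y‖))
    (hh : ∀ᶠ σ in 𝓝 (log ‖x‖), HasDerivAt h (h' σ) σ) (hh' : HasDerivAt h' h'' (log ‖x‖)) :
    euclideanLaplacian n φ x = (h'' + (n - 2) * h' (log ‖x‖)) / ‖x‖ ^ 2 := by
  have hq : ‖x‖ ^ 2 ≠ 0 := by positivity
  have hlog : ∀ r : ℝ, log (r ^ 2) / 2 = log r := fun r => by rw [Real.log_pow]; ring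
  have hcont : ContinuousAt (fun q : ℝ => log q / 2) (‖x‖ ^ 2) :=
    (continuousAt_log hq).div_const 2
  have hg : ∀ᶠ q in 𝓝 (‖x‖ ^ 2), HasDerivAt (fun q => h (log q / 2))
      (h' (log q / 2) * (q⁻¹ / 2)) q := by
    rw [← hlog] at hh
    filter_upwards [hcont.eventually hh, eventually_ne_nhds hq] with q hq' hq0
    exact hq'.comp q ((hasDerivAt_log hq0).div_const 2)
  have hg' : HasDerivAt (fun q => h' (log q / 2) * (q⁻¹ / 2))
      (h'' * ((‖x‖ ^ 2)⁻¹ / 2) * ((‖x‖ ^ 2)⁻¹ / 2) + h' (log ‖x‖) * (-((‖x‖ ^ 2) ^ 2)⁻¹ / 2))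
      (‖x‖ ^ 2) := by
    rw [← hlog] at hh'
    have := (hh'.comp (‖x‖ ^ 2) ((hasDerivAt_log hq).div_const 2)).mul
      ((hasDerivAt_inv hq).div_const 2)
    exact this.congr_deriv (by simp)
  rw [euclideanLaplacian_of_eventuallyEq_comp_norm_sq (by simpa only [hlog] using hφ) hg hg', hlog]
  field_simp
  ring

theorem hasDerivAt_rpow_neg_sub_rpow {ν c q σ : ℝ} (hσ : 0 < σ) (hc : c < σ ^ (-(ν - 1))) :
    HasDerivAt (fun σ => (σ ^ (-(ν - 1)) - c) ^ q)
      (-(q * (ν - 1)) * ((σ ^ (-(ν - 1)) - c) ^ (q - 1) * σ ^ (-ν))) σ := by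
  have := ((hasDerivAt_rpow_const (p := -(ν - 1)) (Or.inl hσ.ne')).sub_const c).rpow_const
    (p := q) (Or.inl (sub_pos.2 hc).ne')
  refine this.congr_deriv ?_
  rw [show -(ν - 1) - 1 = -ν by ring]
  ring

theorem euclideanLaplacian_gap_rpow {n : ℕ} {φ : EuclideanSpace ℝ (Fin n) → ℝ}
    {K p ν c : ℝ} {x : EuclideanSpace ℝ (Fin n)} (hs : 0 < log ‖x‖)
    (hc : c < log ‖x‖ ^ (-(ν - 1)))
    (hφ : φ =ᶠ[𝓝 x] fun y => K * (log ‖y‖ ^ (-(ν - 1)) - c) ^ (p + 1)) :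
    euclideanLaplacian n φ x =
      K * (p + 1) * (ν - 1) * (log ‖x‖ ^ (-(ν - 1)) - c) ^ (p - 1) / ‖x‖ ^ 2 *
        (p * (ν - 1) * (log ‖x‖ ^ (-ν)) ^ 2
          + (ν / log ‖x‖ - (n - 2)) * (log ‖x‖ ^ (-(ν - 1)) - c) * log ‖x‖ ^ (-ν)) := by
  have hx : x ≠ 0 := by rintro rfl; simp at hs
  have hnear : ∀ᶠ σ in 𝓝 (log ‖x‖), 0 < σ ∧ c < σ ^ (-(ν - 1)) :=
    (eventually_gt_nhds hs).and <|
      ((continuousAt_id.rpow_const (Or.inl hs.ne')).eventually (eventually_gt_nhds hc))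
  have hh : ∀ᶠ σ in 𝓝 (log ‖x‖), HasDerivAt (fun σ => K * (σ ^ (-(ν - 1)) - c) ^ (p + 1))
      (K * (-((p + 1) * (ν - 1)) * ((σ ^ (-(ν - 1)) - c) ^ p * σ ^ (-ν)))) σ := by
    filter_upwards [hnear] with σ ⟨hσ, hσc⟩
    simpa using (hasDerivAt_rpow_neg_sub_rpow (q := p + 1) hσ hσc).const_mul K
  have hh' := (((hasDerivAt_rpow_neg_sub_rpow (q := p) hs hc).mul
    (hasDerivAt_rpow_const (p := -ν) (Or.inl hs.ne'))).const_mul (-((p + 1) * (ν - 1)))).const_mul K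
  rw [euclideanLaplacian_of_eventuallyEq_comp_log_norm hx hφ hh hh',
    rpow_sub_one (sub_pos.2 hc).ne', rpow_sub_one hs.ne']
  have hB := (sub_pos.2 hc).ne'
  generalize log ‖x‖ ^ (-(ν - 1)) - c = B at hB ⊢
  field_simp
  ring

theorem barrier_rpow {C T B p m : ℝ} (hC : 0 ≤ C) (hT : 0 < T) (hB : 0 ≤ B)
    (hpm : p * m = p + 1) :
    (C * T ^ (-p) * B ^ p) ^ m = C ^ m * T ^ (-(p + 1)) * B ^ (p + 1) := by
  rw [mul_rpow (by positivity) (by positivity), mul_rpow hC (by positivity), ← rpow_mul hT.le,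
    ← rpow_mul hB, neg_mul, hpm]

theorem euclideanLaplacian_barrier_rpow {n : ℕ} {C T p m ν c : ℝ} {x : EuclideanSpace ℝ (Fin n)}
    (hC : 0 ≤ C) (hT : 0 < T) (hpm : p * m = p + 1) (hs : 0 < log ‖x‖)
    (hc : c < log ‖x‖ ^ (-(ν - 1))) :
    euclideanLaplacian n (fun y => (C * T ^ (-p) * max (log ‖y‖ ^ (-(ν - 1)) - c) 0 ^ p) ^ m) x =
      C ^ m * T ^ (-(p + 1)) * (p + 1) * (ν - 1) * (log ‖x‖ ^ (-(ν - 1)) - c) ^ (p - 1)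
        / ‖x‖ ^ 2 * (p * (ν - 1) * (log ‖x‖ ^ (-ν)) ^ 2
          + (ν / log ‖x‖ - (n - 2)) * (log ‖x‖ ^ (-(ν - 1)) - c) * log ‖x‖ ^ (-ν)) := by
  refine euclideanLaplacian_gap_rpow hs hc ?_
  have hx : ‖x‖ ≠ 0 := fun h => by simp [h] at hs
  have hcont : ContinuousAt (fun y : EuclideanSpace ℝ (Fin n) => log ‖y‖ ^ (-(ν - 1))) x :=
    ((continuousAt_log hx).comp continuous_norm.continuousAt).rpow_const
      (Or.inl hs.ne')
  filter_upwards [hcont.eventually (eventually_gt_nhds hc)] with y hy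
  rw [max_eq_left (sub_pos.2 hy).le, barrier_rpow hC hT (sub_pos.2 hy).le hpm]

theorem hasDerivAt_barrier_time_s15 {C p ν γ b t₀ t : ℝ} (hT : 1 < t + t₀)
    (hb : γ * log (t + t₀) ^ (-(ν - 1)) < b) :
    HasDerivAt (fun τ => C * (τ + t₀) ^ (-p) * max (b - γ * log (τ + t₀) ^ (-(ν - 1))) 0 ^ p)
      (C * p * (t + t₀) ^ (-(p + 1)) * (b - γ * log (t + t₀) ^ (-(ν - 1))) ^ (p - 1) *
        (γ * (ν - 1) * log (t + t₀) ^ (-ν) - (b - γ * log (t + t₀) ^ (-(ν - 1))))) t := by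
  have hT0 : t + t₀ ≠ 0 := by positivity
  have hL : 0 < log (t + t₀) := log_pos hT
  have hB : 0 < b - γ * log (t + t₀) ^ (-(ν - 1)) := sub_pos.2 hb
  have hgap : HasDerivAt (fun τ => b - γ * log (τ + t₀) ^ (-(ν - 1)))
      (γ * (ν - 1) * log (t + t₀) ^ (-ν) / (t + t₀)) t := by
    have := ((((hasDerivAt_id t).add_const t₀).log hT0).rpow_const (p := -(ν - 1))
      (Or.inl hL.ne')).const_mul γ |>.const_sub b
    refine this.congr_deriv ?_
    rw [show -(ν - 1) - 1 = -ν by ring]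
    simp
    ring
  have hmax : (fun τ => C * (τ + t₀) ^ (-p) * (b - γ * log (τ + t₀) ^ (-(ν - 1))) ^ p) =ᶠ[𝓝 t]
      fun τ => C * (τ + t₀) ^ (-p) * max (b - γ * log (τ + t₀) ^ (-(ν - 1))) 0 ^ p := by
    filter_upwards [hgap.continuousAt.eventually (eventually_gt_nhds hB)] with τ hτ
    rw [max_eq_left hτ.le]
  refine ((((hasDerivAt_id t).add_const t₀).rpow_const (p := -p) (Or.inl hT0)).const_mul C
    |>.mul (hgap.rpow_const (p := p) (Or.inl hB.ne'))).congr_of_eventuallyEq hmax.symm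
    |>.congr_deriv ?_
  have hBp : (b - γ * log (t + t₀) ^ (-(ν - 1))) ^ p
      = (b - γ * log (t + t₀) ^ (-(ν - 1))) ^ (p - 1) * (b - γ * log (t + t₀) ^ (-(ν - 1))) := by
    rw [← rpow_add_one hB.ne', sub_add_cancel]
  rw [id, hBp, neg_add', rpow_sub_one hT0]
  field_simp
  ring

theorem barrier_spatial_term_le {p ν N K s B S θ : ℝ} (hν : 0 < ν) (hN : 1 ≤ N) (hK : 0 ≤ K)
    (hθ : 4 * p * (ν - 1) / N ≤ θ) (hs : 2 * ν ≤ s) (hB : 0 ≤ B) (hS : 0 ≤ S) :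
    4 * K / N * (p * (ν - 1) * S ^ 2 + (ν / s - N) * B * S) ≤ K * S * (θ * S - 2 * B) := by
  have hs0 : 0 < s := by linarith
  have hνs : ν / s ≤ N / 2 := by rw [div_le_iff₀ hs0]; nlinarith
  have h1 : 4 * K / N * (p * (ν - 1)) ≤ K * θ := by
    rw [div_mul_eq_mul_div, div_le_iff₀ (by linarith)]
    rw [div_le_iff₀ (by linarith)] at hθ
    nlinarith
  have h2 : 4 * K / N * (ν / s - N) ≤ -2 * K := by
    rw [div_mul_eq_mul_div, div_le_iff₀ (by linarith)]
    nlinarith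
  nlinarith [mul_nonneg hS hS, mul_nonneg hB hS]

theorem rpow_neg_le_of_near_free_boundary {ν κ θ s ℓ : ℝ} (hν : 1 < ν) (hκ : 0 < κ) (hs : 0 < s)
    (hℓ : 0 < ℓ) (hθs : 2 * θ ≤ s)
    (h : s ^ (-(ν - 1)) - κ ^ (-(ν - 1)) / 2 * ℓ ^ (-(ν - 1)) ≤ θ * s ^ (-ν)) :
    (ν - 1) * κ / 2 * s ^ (-ν) ≤ κ ^ (-(ν - 1)) / 2 * (ν - 1) * ℓ ^ (-ν) := by
  have hsν : s ^ (-ν) = s ^ (-(ν - 1)) / s := by rw [← rpow_sub_one hs.ne']; ring_nf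
  have hθS : θ * s ^ (-ν) ≤ s ^ (-(ν - 1)) / 2 := by
    rw [hsν, mul_div_assoc', div_le_div_iff₀ hs two_pos]
    nlinarith [rpow_pos_of_pos hs (-(ν - 1))]
  have hfront : s ^ (-(ν - 1)) ≤ (κ * ℓ) ^ (-(ν - 1)) := by
    rw [mul_rpow hκ.le hℓ.le]; linarith
  have hκℓ : κ * ℓ ≤ s :=
    (rpow_le_rpow_iff_of_neg hs (by positivity) (by linarith)).1 hfront
  have hpow : s ^ (-ν) ≤ κ ^ (-ν) * ℓ ^ (-ν) := by
    rw [← mul_rpow hκ.le hℓ.le]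
    exact rpow_le_rpow_of_nonpos (by positivity) hκℓ (by linarith)
  have hκν : κ ^ (-(ν - 1)) = κ ^ (-ν) * κ := by rw [← rpow_add_one hκ.ne']; ring_nf
  rw [hκν]
  have : 0 ≤ (ν - 1) * κ / 2 := by have := sub_pos.2 hν; positivity
  nlinarith [mul_le_mul_of_nonneg_left hpow this]

theorem barrier_scalar_ineq {p ν N K₁ K₂ Q s ℓ θ κ γ : ℝ} (hp : 0 < p) (hν : 1 < ν)
    (hN : 1 ≤ N) (hK₁ : 0 < K₁) (hK₂ : 0 < K₂) (hθ : θ = 4 * p * (ν - 1) / N)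
    (hκ : (ν - 1) * κ / 2 = θ + K₂ * θ / K₁) (hγ : γ = κ ^ (-(ν - 1)) / 2)
    (hs : 2 * (ν + θ) ≤ s) (hℓ : 0 < ℓ) (hB : γ * ℓ ^ (-(ν - 1)) < s ^ (-(ν - 1)))
    (hQ₁ : K₁ * s ^ (-ν) ≤ Q) (hQ₂ : Q ≤ K₂ * s ^ (-ν)) :
    4 * K₂ / N * (p * (ν - 1) * (s ^ (-ν)) ^ 2
        + (ν / s - N) * (s ^ (-(ν - 1)) - γ * ℓ ^ (-(ν - 1))) * s ^ (-ν))
      ≤ Q * (γ * (ν - 1) * ℓ ^ (-ν) - (s ^ (-(ν - 1)) - γ * ℓ ^ (-(ν - 1)))) := by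
  have hθ0 : 0 < θ := by rw [hθ]; exact div_pos (by nlinarith) (by linarith)
  have hs0 : 0 < s := by linarith
  have hS : 0 < s ^ (-ν) := rpow_pos_of_pos hs0 _
  have hκ0 : 0 < κ := by
    have : 0 < (ν - 1) * κ / 2 := by rw [hκ]; positivity
    nlinarith
  have hG : 0 ≤ γ * (ν - 1) * ℓ ^ (-ν) := by
    rw [hγ]; have := sub_pos.2 hν; positivity
  refine (barrier_spatial_term_le (by linarith) hN hK₂.le hθ.ge (by linarith) (sub_pos.2 hB).le
    hS.le).trans ?_
  have hQ : 0 ≤ Q := hQ₁.trans' (by positivity)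
  rcases le_or_gt (θ * s ^ (-ν)) (s ^ (-(ν - 1)) - γ * ℓ ^ (-(ν - 1))) with hfar | hnear
  · nlinarith [mul_le_mul_of_nonneg_right hQ₂ (sub_pos.2 hB).le]
  · have hfront := rpow_neg_le_of_near_free_boundary (θ := θ) hν hκ0 hs0 hℓ (by linarith)
      (by rw [← hγ]; linarith)
    rw [hκ, ← hγ] at hfront
    have hgain := mul_le_mul hQ₁ (le_sub_iff_add_le.2 (by linarith) :
      K₂ * θ / K₁ * s ^ (-ν) ≤ γ * (ν - 1) * ℓ ^ (-ν) - (s ^ (-(ν - 1)) - γ * ℓ ^ (-(ν - 1))))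
      (by positivity) hQ
    have hK : K₁ * s ^ (-ν) * (K₂ * θ / K₁ * s ^ (-ν)) = K₂ * s ^ (-ν) * (θ * s ^ (-ν)) := by
      field_simp
    nlinarith [mul_pos hK₂ hS, sub_pos.2 hB]

theorem mul_rpow_neg_le_of_div_le {K q r s ν : ℝ} (hr : 0 < r) (hs : 0 < s)
    (h : K / (r ^ 2 * s ^ ν) ≤ q) : K * s ^ (-ν) ≤ q * r ^ 2 := by
  rw [div_le_iff₀ (by positivity)] at h
  rw [rpow_neg hs.le, ← div_eq_mul_inv, div_le_iff₀ (by positivity)]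
  linarith

theorem le_mul_rpow_neg_of_le_div {K q r s ν : ℝ} (hr : 0 < r) (hs : 0 < s)
    (h : q ≤ K / (r ^ 2 * s ^ ν)) : q * r ^ 2 ≤ K * s ^ (-ν) := by
  rw [le_div_iff₀ (by positivity)] at h
  rw [rpow_neg hs.le, ← div_eq_mul_inv, le_div_iff₀ (by positivity)]
  linarith

theorem barrier_supersolution_at_s15 {n : ℕ} {m p ν K₁ K₂ θ κ γ C t₀ t q : ℝ}
    {x : EuclideanSpace ℝ (Fin n)} (hpm : p * m = p + 1) (hp : 0 < p) (hν : 1 < ν)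
    (hN : 1 ≤ (n : ℝ) - 2) (hK₁ : 0 < K₁) (hK₂ : 0 < K₂) (hθ : θ = 4 * p * (ν - 1) / (n - 2))
    (hκ : (ν - 1) * κ / 2 = θ + K₂ * θ / K₁) (hγ : γ = κ ^ (-(ν - 1)) / 2) (hC0 : 0 < C)
    (hC : C ^ (m - 1) * (m * (ν - 1) * (n - 2)) = 4 * K₂) (hs : 2 * (ν + θ) ≤ log ‖x‖)
    (hT : 1 < t + t₀) (hB : γ * log (t + t₀) ^ (-(ν - 1)) < log ‖x‖ ^ (-(ν - 1)))
    (hq₁ : K₁ * log ‖x‖ ^ (-ν) ≤ q * ‖x‖ ^ 2) (hq₂ : q * ‖x‖ ^ 2 ≤ K₂ * log ‖x‖ ^ (-ν)) :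
    euclideanLaplacian n (fun y => (C * (t + t₀) ^ (-p) *
        max (log ‖y‖ ^ (-(ν - 1)) - γ * log (t + t₀) ^ (-(ν - 1))) 0 ^ p) ^ m) x
      ≤ q * deriv (fun τ => C * (τ + t₀) ^ (-p) *
        max (log ‖x‖ ^ (-(ν - 1)) - γ * log (τ + t₀) ^ (-(ν - 1))) 0 ^ p) t := by
  have hθ0 : 0 < θ := by rw [hθ]; exact div_pos (by nlinarith) (by linarith)
  rw [euclideanLaplacian_barrier_rpow hC0.le (by linarith) hpm (by linarith) hB,
    (hasDerivAt_barrier_time_s15 hT hB).deriv]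
  have hkey := barrier_scalar_ineq hp hν hN hK₁ hK₂ hθ hκ hγ hs (log_pos hT) hB hq₁ hq₂
  have hx : ‖x‖ ≠ 0 := fun h => by simp [h] at hs; linarith
  set B := log ‖x‖ ^ (-(ν - 1)) - γ * log (t + t₀) ^ (-(ν - 1))
  have hF : 0 ≤ C * p * (t + t₀) ^ (-(p + 1)) * B ^ (p - 1) / ‖x‖ ^ 2 := by
    have := (sub_pos.2 hB).le
    positivity
  have hm : m ≠ 0 := by rintro rfl; linarith
  have hν1 : ν - 1 ≠ 0 := by linarith
  have hCm : C ^ m = C * p * (4 * K₂ / (n - 2)) / ((p + 1) * (ν - 1)) := by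
    rw [← hC, rpow_sub_one hC0.ne', ← hpm]
    field_simp
  refine Eq.trans_le ?_ ((mul_le_mul_of_nonneg_left hkey hF).trans_eq ?_)
  · rw [hCm]
    field_simp
  · field_simp

theorem stmt_15_general (n : ℕ) (hn : 3 ≤ n) (m ν K₁ K₂ : ℝ)
    (hm : 1 < m) (hν : 1 < ν) (hK₁ : 0 < K₁) (hK₂ : 0 < K₂)
    (ρ : EuclideanSpace ℝ (Fin n) → ℝ)
    (hρlow : ∀ x, 2 ≤ ‖x‖ → K₁ / (‖x‖ ^ 2 * (Real.log ‖x‖) ^ ν) ≤ ρ x)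
    (hρup : ∀ x, 2 ≤ ‖x‖ → ρ x ≤ K₂ / (‖x‖ ^ 2 * (Real.log ‖x‖) ^ ν)) :
    ∃ C₂ > (0:ℝ), ∃ γ₂ > (0:ℝ), ∃ R₀ > (2:ℝ), ∃ t₀ > Real.exp 1,
      ∀ U : EuclideanSpace ℝ (Fin n) → ℝ → ℝ,
        (U = fun x t => C₂ * (t + t₀) ^ (-1 / (m - 1)) *
          (max ((Real.log ‖x‖) ^ (-(ν - 1))
            - γ₂ * (Real.log (t + t₀)) ^ (-(ν - 1))) 0) ^ (1 / (m - 1))) →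
        ∀ x : EuclideanSpace ℝ (Fin n), R₀ < ‖x‖ → ∀ t : ℝ, 0 < t →
          γ₂ * (Real.log (t + t₀)) ^ (-(ν - 1)) < (Real.log ‖x‖) ^ (-(ν - 1)) →
          euclideanLaplacian n (fun y => U y t ^ m) x
            ≤ ρ x * deriv (fun τ : ℝ => U x τ) t := by
  have hN : (1 : ℝ) ≤ n - 2 := by
    have : (3 : ℝ) ≤ n := by exact_mod_cast hn
    linarith
  have hm1 : 0 < m - 1 := by linarith
  have hν1 : 0 < ν - 1 := by linarith
  set p := 1 / (m - 1) with hp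
  have hp0 : 0 < p := by positivity
  set θ := 4 * p * (ν - 1) / (n - 2)
  have hθ0 : 0 < θ := div_pos (by positivity) (by linarith)
  set κ := 2 * (θ + K₂ * θ / K₁) / (ν - 1)
  set A := 4 * K₂ / (m * (ν - 1) * (n - 2))
  have hA : 0 < A := div_pos (by positivity) (mul_pos (mul_pos (by linarith) hν1) (by linarith))
  refine ⟨A ^ p, by positivity, κ ^ (-(ν - 1)) / 2, by positivity, exp (2 * (ν + θ)),
    by linarith [add_one_le_exp (2 * (ν + θ))], exp 1 + 1, by linarith, ?_⟩
  rintro U rfl x hx t ht hB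
  have hs : 2 * (ν + θ) < log ‖x‖ := (lt_log_iff_exp_lt ((exp_pos _).trans hx)).2 hx
  have hx2 : 2 ≤ ‖x‖ := by linarith [add_one_le_exp (2 * (ν + θ))]
  have hx0 : 0 < ‖x‖ := by linarith
  have hlog : 0 < log ‖x‖ := by linarith
  rw [neg_div, ← hp]
  exact barrier_supersolution_at_s15 (by rw [hp]; field_simp; ring) hp0 hν hN hK₁ hK₂ rfl
    (by simp only [κ, θ]; field_simp) rfl (by positivity)
    (by rw [← rpow_mul hA.le, hp, one_div_mul_cancel hm1.ne', rpow_one]; simp only [A]; field_simp)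
    hs.le (by linarith [exp_pos 1]) hB (mul_rpow_neg_le_of_div_le hx0 hlog (hρlow x hx2))
    (le_mul_rpow_neg_of_le_div hx0 hlog (hρup x hx2))

/-- Supersolution barrier for the weighted Euclidean porous medium equation
(proof of Theorem 4.1 (i), upper bound): for a weight
`ρ(x) ≍ |x|^{-2} (log|x|)^{-ν}` with `ν > 1`, the function
`ū(x,t) = C₂ (t+t₀)^{-1/(m-1)} [(log|x|)^{-(ν-1)} − γ₂ (log(t+t₀))^{-(ν-1)}]₊^{1/(m-1)}`
satisfies `ρ ∂_t ū ≥ Δ(ū^m)` in the region `|x| > R₀`, `t > 0` where its bracket is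
positive, for suitable constants `C₂, γ₂ > 0`, `R₀ > 2`, `t₀ > e`. -/
theorem stmt_15 (n : ℕ) (hn : 3 ≤ n) (m ν K₁ K₂ : ℝ)
    (hm : 1 < m) (hν : 1 < ν) (hK₁ : 0 < K₁) (hK₂ : 0 < K₂) (hK : K₁ ≤ K₂)
    (ρ : EuclideanSpace ℝ (Fin n) → ℝ) (hρmeas : Measurable ρ) (hρpos : ∀ x, 0 < ρ x)
    (hρlow : ∀ x, 2 ≤ ‖x‖ → K₁ / (‖x‖ ^ 2 * (Real.log ‖x‖) ^ ν) ≤ ρ x)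
    (hρup : ∀ x, 2 ≤ ‖x‖ → ρ x ≤ K₂ / (‖x‖ ^ 2 * (Real.log ‖x‖) ^ ν)) :
    ∃ C₂ > (0:ℝ), ∃ γ₂ > (0:ℝ), ∃ R₀ > (2:ℝ), ∃ t₀ > Real.exp 1,
      ∀ U : EuclideanSpace ℝ (Fin n) → ℝ → ℝ,
        (U = fun x t => C₂ * (t + t₀) ^ (-1 / (m - 1)) *
          (max ((Real.log ‖x‖) ^ (-(ν - 1))
            - γ₂ * (Real.log (t + t₀)) ^ (-(ν - 1))) 0) ^ (1 / (m - 1))) →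
        ∀ x : EuclideanSpace ℝ (Fin n), R₀ < ‖x‖ → ∀ t : ℝ, 0 < t →
          γ₂ * (Real.log (t + t₀)) ^ (-(ν - 1)) < (Real.log ‖x‖) ^ (-(ν - 1)) →
          euclideanLaplacian n (fun y => U y t ^ m) x
            ≤ ρ x * deriv (fun τ : ℝ => U x τ) t :=
  stmt_15_general n hn m ν K₁ K₂ hm hν hK₁ hK₂ ρ hρlow hρup
end
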